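/- arXiv:2511.00374 — 12 statements merged into one kernel-verified Lean document; each statement's English description precedes it below -/
import Mathlib

section
/- Let n ≥ 1 and let A be a 2n × 2n skew-symmetric matrix over ℚ (Aᵀ = -A) such that every off-diagonal entry of A is an odd rational. Then there exists an odd rational q with det A = q². In particular, det A ≠ 0. -/
/-!
Eliminate the leading `2 × 2` block `!![0, a; -a, 0]` of a skew-symmetric matrix `M`: the Schur
complement `S` is again skew-symmetric and `det M = a ^ 2 * det S`. Its off-diagonal entries have the
form `e - (x * y - z * w) / a` with `e, x, y, z, w, a` odd, and an odd rational minus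
(even / odd) is odd. Induction on the size then exhibits `det M` as the square of the product of
the pivots.
-/

open Matrix

/-- A rational number is *odd* if it can be written as `a / b` with both `a` and `b`
odd integers. -/
def OddRat (q : ℚ) : Prop := ∃ a b : ℤ, Odd a ∧ Odd b ∧ q = (a : ℚ) / (b : ℚ)

def EvenRat (q : ℚ) : Prop := ∃ a b : ℤ, Even a ∧ Odd b ∧ q = (a : ℚ) / (b : ℚ)

lemma Odd.intCast_ne_zero {R : Type*} [AddGroupWithOne R] [CharZero R] {b : ℤ} (hb : Odd b) :
    (b : R) ≠ 0 :=
  Int.cast_ne_zero.mpr fun h => by simp [h] at hb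

namespace OddRat

lemma ne_zero {q : ℚ} (hq : OddRat q) : q ≠ 0 := by
  obtain ⟨a, b, ha, hb, rfl⟩ := hq
  exact div_ne_zero ha.intCast_ne_zero hb.intCast_ne_zero

lemma mul {q r : ℚ} (hq : OddRat q) (hr : OddRat r) : OddRat (q * r) := by
  obtain ⟨a, b, ha, hb, rfl⟩ := hq
  obtain ⟨c, d, hc, hd, rfl⟩ := hr
  exact ⟨a * c, b * d, ha.mul hc, hb.mul hd, by push_cast; rw [div_mul_div_comm]⟩

lemma sub_odd {q r : ℚ} (hq : OddRat q) (hr : OddRat r) : EvenRat (q - r) := by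
  obtain ⟨a, b, ha, hb, rfl⟩ := hq
  obtain ⟨c, d, hc, hd, rfl⟩ := hr
  refine ⟨a * d - b * c, b * d, (ha.mul hd).sub_odd (hb.mul hc), hb.mul hd, ?_⟩
  rw [div_sub_div _ _ hb.intCast_ne_zero hd.intCast_ne_zero]
  push_cast; rfl

lemma sub_even {q r : ℚ} (hq : OddRat q) (hr : EvenRat r) : OddRat (q - r) := by
  obtain ⟨a, b, ha, hb, rfl⟩ := hq
  obtain ⟨c, d, hc, hd, rfl⟩ := hr
  refine ⟨a * d - b * c, b * d, (ha.mul hd).sub_even (hc.mul_left b), hb.mul hd, ?_⟩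
  rw [div_sub_div _ _ hb.intCast_ne_zero hd.intCast_ne_zero]
  push_cast; rfl

end OddRat

lemma EvenRat.div_odd {q r : ℚ} (hq : EvenRat q) (hr : OddRat r) : EvenRat (q / r) := by
  obtain ⟨a, b, ha, hb, rfl⟩ := hq
  obtain ⟨c, d, hc, hd, rfl⟩ := hr
  refine ⟨a * d, b * c, ha.mul_right d, hb.mul hc, ?_⟩
  rw [div_div_div_eq]
  push_cast; rfl

namespace Matrix

open Sum

lemma apply_eq_neg_of_transpose_eq_neg {n R : Type*} [Neg R] {A : Matrix n n R} (hA : Aᵀ = -A)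
    (i j : n) : A j i = -A i j := by
  simpa using congrFun₂ hA i j

variable {K ι : Type*} [Field K]

/-- The Schur complement of the leading block `!![0, a; -a, 0]`, with `a = M (inl 0) (inl 1)`. -/
def pivotSchur (M : Matrix (Fin 2 ⊕ ι) (Fin 2 ⊕ ι) K) : Matrix ι ι K :=
  of fun i j => M (inr i) (inr j) -
    (M (inr i) (inl 1) * M (inl 0) (inr j) - M (inr i) (inl 0) * M (inl 1) (inr j)) /
      M (inl 0) (inl 1)

lemma pivotSchur_transpose {M : Matrix (Fin 2 ⊕ ι) (Fin 2 ⊕ ι) K} (hM : Mᵀ = -M) :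
    (pivotSchur M)ᵀ = -pivotSchur M := by
  ext i j
  have hE := apply_eq_neg_of_transpose_eq_neg hM (inr i) (inr j)
  have hD (k : Fin 2) := apply_eq_neg_of_transpose_eq_neg hM (inl k) (inr j)
  have hC (k : Fin 2) := apply_eq_neg_of_transpose_eq_neg hM (inr i) (inl k)
  simp only [pivotSchur, transpose_apply, neg_apply, of_apply, hE, hD, hC]
  ring

lemma toBlocks₁₁_eq_of_transpose_eq_neg [CharZero K] {M : Matrix (Fin 2 ⊕ ι) (Fin 2 ⊕ ι) K}
    (hM : Mᵀ = -M) : M.toBlocks₁₁ = !![0, M (inl 0) (inl 1); -M (inl 0) (inl 1), 0] := by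
  have hdiag (k : Fin 2) : M (inl k) (inl k) = 0 :=
    self_eq_neg.mp (apply_eq_neg_of_transpose_eq_neg hM (inl k) (inl k))
  ext i j
  fin_cases i <;> fin_cases j <;>
    simp [toBlocks₁₁, hdiag, apply_eq_neg_of_transpose_eq_neg hM (inl 0) (inl 1)]

lemma det_eq_sq_mul_det_pivotSchur [Fintype ι] [DecidableEq ι]
    {M : Matrix (Fin 2 ⊕ ι) (Fin 2 ⊕ ι) K}
    (hB : M.toBlocks₁₁ = !![0, M (inl 0) (inl 1); -M (inl 0) (inl 1), 0])
    (ha : M (inl 0) (inl 1) ≠ 0) :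
    M.det = M (inl 0) (inl 1) ^ 2 * (pivotSchur M).det := by
  set a := M (inl 0) (inl 1)
  have hBinv : M.toBlocks₁₁ * !![0, -a⁻¹; a⁻¹, 0] = 1 := by
    rw [hB]
    ext i j
    fin_cases i <;> fin_cases j <;> simp [mul_apply, ha]
  let := invertibleOfRightInverse _ _ hBinv
  have hS : M.toBlocks₂₂ - M.toBlocks₂₁ * ⅟M.toBlocks₁₁ * M.toBlocks₁₂ = pivotSchur M := by
    ext i j
    simp [invOf_eq_right_inv hBinv, pivotSchur, mul_apply, Fin.sum_univ_two, toBlocks₂₂,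
      toBlocks₂₁, toBlocks₁₂, a]
    ring
  calc M.det = (fromBlocks M.toBlocks₁₁ M.toBlocks₁₂ M.toBlocks₂₁ M.toBlocks₂₂).det := by
        rw [fromBlocks_toBlocks]
    _ = a ^ 2 * (pivotSchur M).det := by
        rw [det_fromBlocks₁₁, hS, hB, det_fin_two_of]
        ring

end Matrix

open Sum

lemma oddRat_pivotSchur_apply {ι : Type*} {M : Matrix (Fin 2 ⊕ ι) (Fin 2 ⊕ ι) ℚ}
    (hM : ∀ i j, i ≠ j → OddRat (M i j)) {i j : ι} (hij : i ≠ j) :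
    OddRat (pivotSchur M i j) :=
  (hM _ _ (by simpa)).sub_even <|
    (((hM _ _ (by simp)).mul (hM _ _ (by simp))).sub_odd
      ((hM _ _ (by simp)).mul (hM _ _ (by simp)))).div_odd (hM _ _ (by simp))

lemma exists_oddRat_sq_eq_det (n : ℕ) (A : Matrix (Fin (2 * n)) (Fin (2 * n)) ℚ)
    (hA : Aᵀ = -A) (hodd : ∀ i j, i ≠ j → OddRat (A i j)) :
    ∃ q : ℚ, OddRat q ∧ A.det = q ^ 2 := by
  induction n with
  | zero => exact ⟨1, ⟨1, 1, odd_one, odd_one, by norm_num⟩, by simp⟩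
  | succ n ih =>
    let e : Fin 2 ⊕ Fin (2 * n) ≃ Fin (2 * (n + 1)) := finSumFinEquiv.trans (finCongr (by ring))
    set M := A.submatrix e e
    have hM : Mᵀ = -M := by rw [transpose_submatrix, hA]; rfl
    have hModd (i j) (hij : i ≠ j) : OddRat (M i j) := hodd _ _ (e.injective.ne hij)
    have ha : OddRat (M (inl 0) (inl 1)) := hModd _ _ (by simp)
    obtain ⟨q, hq, hdet⟩ :=
      ih (pivotSchur M) (pivotSchur_transpose hM) fun i j => oddRat_pivotSchur_apply hModd
    refine ⟨M (inl 0) (inl 1) * q, ha.mul hq, ?_⟩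
    rw [← det_submatrix_equiv_self e A,
      det_eq_sq_mul_det_pivotSchur (toBlocks₁₁_eq_of_transpose_eq_neg hM) ha.ne_zero, hdet]
    ring

theorem det_of_odd_skew_symmetric_is_square_of_odd_rat_general
    (n : ℕ) (A : Matrix (Fin (2 * n)) (Fin (2 * n)) ℚ)
    (hskew : Aᵀ = -A) (hodd : ∀ i j : Fin (2 * n), i ≠ j → OddRat (A i j)) :
    ∃ q : ℚ, OddRat q ∧ A.det = q ^ 2 ∧ A.det ≠ 0 := by
  obtain ⟨q, hq, hdet⟩ := exists_oddRat_sq_eq_det n A hskew hodd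
  exact ⟨q, hq, hdet, hdet ▸ pow_ne_zero 2 hq.ne_zero⟩

/-- Every `2n × 2n` skew-symmetric rational matrix all of whose off-diagonal entries are
odd rationals has determinant the square of an odd rational; in particular the
determinant is nonzero. -/
theorem det_of_odd_skew_symmetric_is_square_of_odd_rat
    (n : ℕ) (hn : 1 ≤ n) (A : Matrix (Fin (2 * n)) (Fin (2 * n)) ℚ)
    (hskew : Aᵀ = -A) (hodd : ∀ i j : Fin (2 * n), i ≠ j → OddRat (A i j)) :
    ∃ q : ℚ, OddRat q ∧ A.det = q ^ 2 ∧ A.det ≠ 0 :=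
  det_of_odd_skew_symmetric_is_square_of_odd_rat_general n A hskew hodd
end

section
/- Let n ≥ 1 and let A be a tournament payoff matrix of size 2n (a real skew-symmetric matrix with zero diagonal and all off-diagonal entries equal to 1 or -1). Then det A ≠ 0, and consequently there is no probability vector v with A.mulVec v = 0. (Every 2n-object RPS game is unplayable.) -/
open Matrix

/-- A probability vector: nonnegative entries summing to `1`. -/
def IsProbVec {m : ℕ} (v : Fin m → ℝ) : Prop := (∀ i, 0 ≤ v i) ∧ ∑ i, v i = 1

/-- A tournament payoff matrix: zero diagonal, off-diagonal entries `±1`,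
skew-symmetric. -/
def IsTournament {m : ℕ} (A : Matrix (Fin m) (Fin m) ℝ) : Prop :=
  (∀ i, A i i = 0) ∧ ∀ i j : Fin m, i ≠ j → (A i j = 1 ∨ A i j = -1) ∧ A j i = -A i j

/-!
Reduced mod 2, a matrix with even diagonal and odd off-diagonal entries becomes `1 + J`, with `J`
the all-ones matrix, whose determinant is `1 + m`. For even size `m` this is `1` in `ZMod 2`, so
the integer determinant is odd. A tournament matrix is such an integer matrix, hence invertible,
and its kernel cannot contain a probability vector, which is nonzero.
-/

theorem Matrix.det_one_add_allOnes {ι R : Type*} [Fintype ι] [DecidableEq ι] [CommRing R] :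
    (1 + of fun _ _ : ι => (1 : R)).det = 1 + Fintype.card ι := by
  have hJ : (of fun _ _ : ι => (1 : R)) =
      replicateCol Unit (fun _ : ι => (1 : R)) * replicateRow Unit (fun _ : ι => (1 : R)) := by
    ext i j
    simp [mul_apply]
  rw [hJ, det_one_add_replicateCol_mul_replicateRow]
  simp [dotProduct]

theorem Matrix.odd_det_of_even_diag_of_odd_offDiag {ι : Type*} [Fintype ι] [DecidableEq ι]
    (B : Matrix ι ι ℤ) (hdiag : ∀ i, Even (B i i)) (hoff : ∀ i j, i ≠ j → Odd (B i j))
    (hι : Even (Fintype.card ι)) : Odd B.det := by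
  have hmod : B.map (Int.cast : ℤ → ZMod 2) = 1 + of fun _ _ => 1 := by
    ext i j
    rcases eq_or_ne i j with rfl | hij
    · simp [ZMod.intCast_eq_zero_iff_even.mpr (hdiag i)]
      rfl
    · simpa [one_apply_ne hij] using ZMod.intCast_eq_one_iff_odd.mpr (hoff i j hij)
  rw [← ZMod.intCast_eq_one_iff_odd, Int.cast_det, hmod, det_one_add_allOnes,
    ZMod.natCast_eq_zero_iff_even.mpr hι, add_zero]

theorem IsTournament.det_ne_zero {m : ℕ} {A : Matrix (Fin m) (Fin m) ℝ} (hA : IsTournament A)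
    (hm : Even m) : A.det ≠ 0 := by
  set B := A.map Int.floor
  have hAB : A = B.map (Int.cast : ℤ → ℝ) := by
    ext i j
    rcases eq_or_ne i j with rfl | hij
    · simp [B, hA.1 i]
    · rcases (hA.2 i j hij).1 with h | h <;> norm_num [B, h]
  have hB : Odd B.det := by
    refine B.odd_det_of_even_diag_of_odd_offDiag (fun i => by simp [B, hA.1 i])
      (fun i j hij => ?_) (by simpa using hm)
    rcases (hA.2 i j hij).1 with h | h <;> norm_num [B, h]
  rw [hAB, ← Int.cast_det]
  exact_mod_cast show B.det ≠ 0 by rintro h0; simp [h0] at hB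

theorem IsProbVec.ne_zero {m : ℕ} {v : Fin m → ℝ} (hv : IsProbVec v) : v ≠ 0 := by
  rintro rfl
  simpa using hv.2

theorem even_RPS_unplayable_general (n : ℕ)
    (A : Matrix (Fin (2 * n)) (Fin (2 * n)) ℝ) (hA : IsTournament A) :
    A.det ≠ 0 ∧ ¬ ∃ v : Fin (2 * n) → ℝ, IsProbVec v ∧ A.mulVec v = 0 := by
  have hdet := hA.det_ne_zero (even_two_mul n)
  refine ⟨hdet, ?_⟩
  rintro ⟨v, hv, hAv⟩
  exact hv.ne_zero (eq_zero_of_mulVec_eq_zero hdet hAv)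

/-- Every `2n`-object RPS game is unplayable: the payoff matrix has nonzero determinant,
hence no probability vector lies in its kernel. -/
theorem even_RPS_unplayable (n : ℕ) (hn : 1 ≤ n)
    (A : Matrix (Fin (2 * n)) (Fin (2 * n)) ℝ) (hA : IsTournament A) :
    A.det ≠ 0 ∧ ¬ ∃ v : Fin (2 * n) → ℝ, IsProbVec v ∧ A.mulVec v = 0 :=
  even_RPS_unplayable_general n A hA
end

section
/- Let A : Matrix (Fin m) (Fin m) ℝ be skew-symmetric (Aᵀ = -A). Suppose the game is weakly playable, i.e., for every index i there exists a probability vector w with every entry of A.mulVec w ≤ 0 and w i > 0. Then for every probability vector v with every entry of A.mulVec v ≤ 0, in fact A.mulVec v = 0. (Hence the set of Nash equilibria of a weakly playable symmetric zero-sum two-player game is exactly (ker A ∩ Δ) × (ker A ∩ Δ).) -/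
open Matrix

/-- In a weakly playable symmetric zero-sum two-player game (every pure strategy sees
play in some Nash equilibrium), every probability vector `v` with `A.mulVec v`
entrywise nonpositive actually satisfies `A.mulVec v = 0`; hence the Nash equilibria
are exactly `(ker A ∩ Δ) × (ker A ∩ Δ)`. -/
theorem weakly_playable_nash_in_kernel {m : ℕ} (A : Matrix (Fin m) (Fin m) ℝ)
    (hskew : Aᵀ = -A)
    (hweak : ∀ i : Fin m, ∃ w : Fin m → ℝ,
      IsProbVec w ∧ (∀ j, A.mulVec w j ≤ 0) ∧ 0 < w i) :
    ∀ v : Fin m → ℝ, IsProbVec v → (∀ j, A.mulVec v j ≤ 0) → A.mulVec v = 0 := by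
  intro v hv hvle
  funext j
  by_contra hne
  have hjlt : A.mulVec v j < 0 := lt_of_le_of_ne (hvle j) (by simpa using hne)
  obtain ⟨w, hw, hwle, hwj⟩ := hweak j
  -- w ⬝ᵥ (A v) < 0
  have h1 : w ⬝ᵥ A.mulVec v < 0 := by
    have : ∑ i, w i * A.mulVec v i < 0 := by
      apply Finset.sum_neg' (fun i _ => mul_nonpos_of_nonneg_of_nonpos (hw.1 i) (hvle i))
      exact ⟨j, Finset.mem_univ j, mul_neg_of_pos_of_neg hwj hjlt⟩
    simpa [dotProduct] using this
  -- but w ⬝ᵥ (A v) = -(v ⬝ᵥ A w) ≥ 0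
  have h2 : w ⬝ᵥ A.mulVec v = -(v ⬝ᵥ A.mulVec w) := by
    rw [dotProduct_mulVec, ← mulVec_transpose, hskew, neg_mulVec, neg_dotProduct,
      dotProduct_comm]
  have h3 : 0 ≤ -(v ⬝ᵥ A.mulVec w) := by
    have : v ⬝ᵥ A.mulVec w ≤ 0 :=
      Finset.sum_nonpos fun i _ => mul_nonpos_of_nonneg_of_nonpos (hv.1 i) (hwle i)
    linarith
  rw [h2] at h1
  linarith
end

section
/- Let n ≥ 0 and let A be a tournament payoff matrix of size 2n+1. Then every probability vector v with A.mulVec v = 0 is totally mixed: v i > 0 for every i. -/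
open Matrix

namespace Matrix

variable {ι R : Type*} [Fintype ι]

theorem of_one_mul_of_one [NonAssocSemiring R] :
    (of 1 : Matrix ι ι R) * of 1 = (Fintype.card ι : R) • of 1 := by
  ext i j
  simp [mul_apply]

variable [DecidableEq ι]

theorem of_one_sub_one_mul_self [Ring R] [CharP R 2] (hcard : Even (Fintype.card ι)) :
    (of 1 - 1 : Matrix ι ι R) * (of 1 - 1) = 1 := by
  have hcard_zero : (Fintype.card ι : R) = 0 :=
    (CharP.cast_eq_zero_iff R 2 _).2 (even_iff_two_dvd.1 hcard)
  rw [sub_mul, mul_sub, mul_sub, of_one_mul_of_one, hcard_zero, zero_smul, mul_one, one_mul, mul_one,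
    zero_sub]
  ext i j
  simp [one_apply, CharTwo.neg_eq]

theorem odd_det_of_odd_offDiag (B : Matrix ι ι ℤ) (hdiag : ∀ i, B i i = 0)
    (hodd : ∀ i j, i ≠ j → Odd (B i j)) (hcard : Even (Fintype.card ι)) : Odd B.det := by
  have hmod : B.map ((↑) : ℤ → ZMod 2) = of 1 - 1 := by
    ext i j
    by_cases hij : i = j
    · subst hij
      simp [hdiag]
    · simp [hij, ZMod.intCast_eq_one_iff_odd.2 (hodd i j hij)]
  have hsq : (B.det : ZMod 2) * B.det = 1 := by
    rw [Int.cast_det, ← det_mul, hmod, of_one_sub_one_mul_self hcard, det_one]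
  rw [← ZMod.intCast_eq_one_iff_odd]
  generalize (B.det : ZMod 2) = x at hsq
  revert x
  decide

theorem det_ne_zero_of_offDiag_eq_one_or_neg_one [CommRing R] [CharZero R] (A : Matrix ι ι R)
    (hdiag : ∀ i, A i i = 0) (hoff : ∀ i j, i ≠ j → A i j = 1 ∨ A i j = -1)
    (hcard : Even (Fintype.card ι)) : A.det ≠ 0 := by
  have hlift : ∀ i j, ∃ z : ℤ, (z : R) = A i j ∧ (i = j → z = 0) ∧ (i ≠ j → Odd z) := by
    intro i j
    by_cases hij : i = j
    · exact ⟨0, by simp [hij, hdiag], fun _ => rfl, fun h => absurd hij h⟩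
    · rcases hoff i j hij with h | h
      · exact ⟨1, by simp [h], fun h' => absurd h' hij, fun _ => odd_one⟩
      · exact ⟨-1, by simp [h], fun h' => absurd h' hij, fun _ => odd_neg_one⟩
  choose B hBA hBdiag hBodd using hlift
  have hA : A = (of B).map (↑) := by
    ext i j
    exact (hBA i j).symm
  rw [hA, ← Int.cast_det, Int.cast_ne_zero]
  rintro hdet
  simpa [hdet] using odd_det_of_odd_offDiag (of B) (fun i => hBdiag i i rfl) hBodd hcard

theorem submatrix_succAbove_mulVec_of_eq_zero {κ ι' : Type*} {m : ℕ}
    [NonUnitalNonAssocSemiring R] (A : Matrix ι' (Fin (m + 1)) R) (r : κ → ι')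
    {v : Fin (m + 1) → R} {k : Fin (m + 1)} (hk : v k = 0) :
    A.submatrix r k.succAbove *ᵥ (v ∘ k.succAbove) = (A *ᵥ v) ∘ r := by
  funext i
  simp [mulVec, dotProduct, Fin.sum_univ_succAbove _ k, hk]

end Matrix

/-- For a `(2n+1)`-object RPS game, every probability vector in the kernel of the
payoff matrix is totally mixed. -/
theorem kernel_prob_vec_totally_mixed (n : ℕ)
    (A : Matrix (Fin (2 * n + 1)) (Fin (2 * n + 1)) ℝ) (hA : IsTournament A)
    (v : Fin (2 * n + 1) → ℝ) (hv : IsProbVec v) (hker : A.mulVec v = 0) :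
    ∀ i, 0 < v i := by
  obtain ⟨hdiag, hoff⟩ := hA
  obtain ⟨hv_nonneg, hv_sum⟩ := hv
  intro k
  refine (hv_nonneg k).lt_of_ne' fun hk => ?_
  have hdet : (A.submatrix k.succAbove k.succAbove).det ≠ 0 :=
    det_ne_zero_of_offDiag_eq_one_or_neg_one _ (fun i => hdiag _)
      (fun i j hij => (hoff _ _ (k.succAbove_right_injective.ne hij)).1) (by simp)
  have hrest : v ∘ k.succAbove = 0 := eq_zero_of_mulVec_eq_zero hdet <| by
    rw [submatrix_succAbove_mulVec_of_eq_zero A k.succAbove hk, hker]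
    rfl
  have : ∑ i, v i = 0 := by
    rw [Fin.sum_univ_succAbove _ k, hk, zero_add]
    exact Fintype.sum_eq_zero _ (congrFun hrest)
  linarith
end

section
/- Let n ≥ 0 and let A be a tournament payoff matrix of size 2n+1. Suppose the game is weakly playable: for every index i there exist probability vectors x, y with all entries of A.mulVec x and A.mulVec y nonpositive (a Nash equilibrium) and x i > 0. Then there exists a unique probability vector v with A.mulVec v = 0; this v satisfies v i > 0 for all i; and every Nash equilibrium (x, y) (i.e., every pair of probability vectors with A.mulVec x ≤ 0 and A.mulVec y ≤ 0 entrywise) satisfies x = y = v. In particular the weakly playable RPS has a unique Nash equilibrium, which is symmetric and totally mixed. -/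
open Matrix

/-!
For a skew-symmetric game, two equilibria `x, y` satisfy `x ⬝ᵥ A y = -(y ⬝ᵥ A x)`, and both
sides are `≤ 0`, so `(A y) i = 0` wherever `x i > 0`. Weak playability thus puts every
equilibrium strategy in the kernel of `A`. Modulo 2 a tournament matrix of even order is
`1 + J` with `J` the all-ones matrix, whose determinant is `1 + m = 1`; hence every principal
minor of order `2n` of `A` is odd, so a kernel vector vanishing at one coordinate vanishes
identically. This makes kernel probability vectors totally mixed, and the kernel a line.
-/

section Skew

variable {R ι : Type*} [CommRing R] [LinearOrder R] [IsStrictOrderedRing R] [Fintype ι]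
  {A : Matrix ι ι R} {x y : ι → R}

lemma dotProduct_mulVec_eq_zero_of_transpose_eq_neg (hA : Aᵀ = -A) (hx : 0 ≤ x) (hy : 0 ≤ y)
    (hAx : A *ᵥ x ≤ 0) (hAy : A *ᵥ y ≤ 0) : x ⬝ᵥ (A *ᵥ y) = 0 := by
  have hswap : x ⬝ᵥ (A *ᵥ y) = -((A *ᵥ x) ⬝ᵥ y) := by
    rw [dotProduct_mulVec, ← mulVec_transpose, hA, neg_mulVec, neg_dotProduct]
  have hle : x ⬝ᵥ (A *ᵥ y) ≤ 0 :=
    Finset.sum_nonpos fun i _ => mul_nonpos_of_nonneg_of_nonpos (hx i) (hAy i)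
  have hge : (A *ᵥ x) ⬝ᵥ y ≤ 0 :=
    Finset.sum_nonpos fun i _ => mul_nonpos_of_nonpos_of_nonneg (hAx i) (hy i)
  linarith

lemma mulVec_apply_eq_zero_of_transpose_eq_neg (hA : Aᵀ = -A) (hx : 0 ≤ x) (hy : 0 ≤ y)
    (hAx : A *ᵥ x ≤ 0) (hAy : A *ᵥ y ≤ 0) {i : ι} (hxi : 0 < x i) : (A *ᵥ y) i = 0 := by
  have hterms := (Finset.sum_eq_zero_iff_of_nonpos fun j _ =>
    mul_nonpos_of_nonneg_of_nonpos (hx j) (hAy j)).mp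
    (dotProduct_mulVec_eq_zero_of_transpose_eq_neg hA hx hy hAx hAy) i (Finset.mem_univ i)
  exact (mul_eq_zero.mp hterms).resolve_left hxi.ne'

end Skew

lemma mulVec_submatrix_succAbove {R : Type*} [NonUnitalNonAssocSemiring R] {m : ℕ}
    (A : Matrix (Fin (m + 1)) (Fin (m + 1)) R) {p : Fin (m + 1) → R} {i : Fin (m + 1)}
    (hpi : p i = 0) :
    A.submatrix i.succAbove i.succAbove *ᵥ (p ∘ i.succAbove) = (A *ᵥ p) ∘ i.succAbove := by
  funext j
  simp [mulVec, dotProduct, Fin.sum_univ_succAbove _ i, hpi]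

namespace IsTournament

section

variable {m : ℕ} {A : Matrix (Fin m) (Fin m) ℝ}

lemma transpose_eq_neg (hA : IsTournament A) : Aᵀ = -A := by
  ext i j
  by_cases h : i = j
  · subst h; simp [hA.1 i]
  · exact (hA.2 i j h).2

lemma submatrix (hA : IsTournament A) {k : ℕ} {f : Fin k → Fin m} (hf : Function.Injective f) :
    IsTournament (A.submatrix f f) :=
  ⟨fun i => hA.1 (f i), fun i j hij => hA.2 (f i) (f j) (hf.ne hij)⟩

lemma exists_int_lift (hA : IsTournament A) :
    ∃ B : Matrix (Fin m) (Fin m) ℤ, B.map (↑) = A ∧ B.map (Int.cast : ℤ → ZMod 2) =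
      1 + replicateCol Unit (1 : Fin m → ZMod 2) * replicateRow Unit (1 : Fin m → ZMod 2) := by
  have entry : ∀ i j, ∃ z : ℤ, (z : ℝ) = A i j ∧
      (z : ZMod 2) = (1 : Matrix (Fin m) (Fin m) (ZMod 2)) i j + 1 := by
    intro i j
    by_cases h : i = j
    · subst h; exact ⟨0, by simp [hA.1 i], by simp; decide⟩
    · rcases (hA.2 i j h).1 with h1 | h1
      · exact ⟨1, by simp [h1], by simp [one_apply_ne h]⟩
      · exact ⟨-1, by simp [h1], by simp [one_apply_ne h]⟩
  choose B hBℝ hB2 using entry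
  exact ⟨of B, ext hBℝ, ext fun i j => by simp [hB2, mul_apply]⟩

theorem det_ne_zero_s6 (hA : IsTournament A) (hm : Even m) : A.det ≠ 0 := by
  obtain ⟨B, hBℝ, hB2⟩ := hA.exists_int_lift
  have hdet_mod_two : ((B.det : ℤ) : ZMod 2) = 1 := by
    rw [Int.cast_det, hB2, det_one_add_replicateCol_mul_replicateRow]
    simp [(ZMod.natCast_eq_zero_iff_even).mpr hm]
  rw [← hBℝ, ← Int.cast_det, Int.cast_ne_zero]
  rintro hB
  simp [hB] at hdet_mod_two

end

section OddOrder

variable {m : ℕ} {A : Matrix (Fin (m + 1)) (Fin (m + 1)) ℝ}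

theorem eq_zero_of_mulVec_eq_zero_of_apply_eq_zero (hA : IsTournament A) (hm : Even m)
    {p : Fin (m + 1) → ℝ} (hp : A *ᵥ p = 0) {i : Fin (m + 1)} (hpi : p i = 0) : p = 0 := by
  have hminor : A.submatrix i.succAbove i.succAbove *ᵥ (p ∘ i.succAbove) = 0 := by
    rw [mulVec_submatrix_succAbove A hpi, hp]; rfl
  have hrest := eq_zero_of_mulVec_eq_zero
    ((hA.submatrix Fin.succAbove_right_injective).det_ne_zero_s6 hm) hminor
  funext j
  exact Fin.succAboveCases i hpi (fun k => congrFun hrest k) j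

theorem eq_smul_of_mulVec_eq_zero (hA : IsTournament A) (hm : Even m) {u v : Fin (m + 1) → ℝ}
    (hu : A *ᵥ u = 0) (hv : A *ᵥ v = 0) {i : Fin (m + 1)} (hvi : v i ≠ 0) :
    u = (u i / v i) • v := by
  refine sub_eq_zero.mp (hA.eq_zero_of_mulVec_eq_zero_of_apply_eq_zero hm (i := i) ?_ ?_)
  · rw [mulVec_sub, mulVec_smul, hu, hv, smul_zero, sub_zero]
  · simp [hvi]

theorem pos_of_isProbVec_of_mulVec_eq_zero (hA : IsTournament A) (hm : Even m)
    {p : Fin (m + 1) → ℝ} (hp : IsProbVec p) (hker : A *ᵥ p = 0) (i : Fin (m + 1)) :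
    0 < p i := by
  refine (hp.1 i).lt_of_ne' fun hpi => ?_
  have hsum := hp.2
  simp [hA.eq_zero_of_mulVec_eq_zero_of_apply_eq_zero hm hker hpi] at hsum

theorem eq_of_isProbVec_of_mulVec_eq_zero (hA : IsTournament A) (hm : Even m)
    {u v : Fin (m + 1) → ℝ} (hu : IsProbVec u) (hv : IsProbVec v)
    (hu0 : A *ᵥ u = 0) (hv0 : A *ᵥ v = 0) : u = v := by
  have hv_pos := hA.pos_of_isProbVec_of_mulVec_eq_zero hm hv hv0 0
  have huv := hA.eq_smul_of_mulVec_eq_zero hm hu0 hv0 hv_pos.ne'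
  have hscale : u 0 / v 0 = 1 := by
    have hsum := congrArg (fun w => ∑ j, w j) huv
    simpa [← Finset.mul_sum, hu.2, hv.2] using hsum.symm
  rw [huv, hscale, one_smul]

end OddOrder

end IsTournament

/-- A weakly playable `(2n+1)`-object RPS game has a unique Nash equilibrium, which is
symmetric and totally mixed: there is a unique probability vector `v` in the kernel of
the payoff matrix, it is everywhere positive, and every Nash equilibrium `(x, y)`
(i.e. every pair of probability vectors with `A.mulVec x` and `A.mulVec y` entrywise
nonpositive) satisfies `x = y = v`. -/
theorem weakly_playable_RPS_unique_nash (n : ℕ)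
    (A : Matrix (Fin (2 * n + 1)) (Fin (2 * n + 1)) ℝ) (hA : IsTournament A)
    (hweak : ∀ i : Fin (2 * n + 1), ∃ x y : Fin (2 * n + 1) → ℝ,
      IsProbVec x ∧ IsProbVec y ∧ (∀ j, A.mulVec x j ≤ 0) ∧ (∀ j, A.mulVec y j ≤ 0) ∧
        0 < x i) :
    ∃ v : Fin (2 * n + 1) → ℝ, (IsProbVec v ∧ A.mulVec v = 0) ∧
      (∀ v' : Fin (2 * n + 1) → ℝ, IsProbVec v' → A.mulVec v' = 0 → v' = v) ∧
      (∀ i, 0 < v i) ∧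
      (∀ x y : Fin (2 * n + 1) → ℝ, IsProbVec x → IsProbVec y →
        (∀ j, A.mulVec x j ≤ 0) → (∀ j, A.mulVec y j ≤ 0) → x = v ∧ y = v) := by
  have hm : Even (2 * n) := even_two_mul n
  have equilibrium_mem_ker : ∀ y, IsProbVec y → A *ᵥ y ≤ 0 → A *ᵥ y = 0 := by
    intro y hy hAy
    funext i
    obtain ⟨x, -, hx, -, hAx, -, hxi⟩ := hweak i
    exact mulVec_apply_eq_zero_of_transpose_eq_neg hA.transpose_eq_neg hx.1 hy.1 hAx hAy hxi
  obtain ⟨v, -, hv, -, hAv, -, -⟩ := hweak 0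
  have hv0 := equilibrium_mem_ker v hv hAv
  have unique : ∀ u, IsProbVec u → A *ᵥ u = 0 → u = v := fun _ hu hu0 =>
    hA.eq_of_isProbVec_of_mulVec_eq_zero hm hu hv hu0 hv0
  refine ⟨v, ⟨hv, hv0⟩, unique, hA.pos_of_isProbVec_of_mulVec_eq_zero hm hv hv0, ?_⟩
  intro x y hx hy hAx hAy
  exact ⟨unique x hx (equilibrium_mem_ker x hx hAx), unique y hy (equilibrium_mem_ker y hy hAy)⟩
end

section
/- Let A be a tournament payoff matrix of size m and suppose some vertex a weakly dominates another vertex b, i.e., a ≠ b, A a b = 1, and A a j ≥ A b j for all j. Then the game is unplayable: there is no probability vector v with A.mulVec v = 0 and v i > 0 for all i. -/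
open Matrix

/-- If in a tournament payoff matrix some vertex `a` weakly dominates another vertex
`b` (`a` beats `b` and does at least as well against every vertex), then the game is
unplayable: no totally mixed symmetric Nash equilibrium exists. -/
theorem weak_domination_unplayable {m : ℕ} (A : Matrix (Fin m) (Fin m) ℝ)
    (hA : IsTournament A) (a b : Fin m) (hab : a ≠ b) (hbeats : A a b = 1)
    (hdom : ∀ j, A b j ≤ A a j) :
    ¬ ∃ v : Fin m → ℝ, IsProbVec v ∧ A.mulVec v = 0 ∧ ∀ i, 0 < v i := by
  rintro ⟨v, hv, heq, hpos⟩
  have ha : ∑ j, A a j * v j = 0 := congrFun heq a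
  have hb : ∑ j, A b j * v j = 0 := congrFun heq b
  have hsum : ∑ j, (A a j - A b j) * v j = 0 := by
    simp only [sub_mul, Finset.sum_sub_distrib, ha, hb, sub_zero]
  have hterm : ∀ j ∈ Finset.univ, 0 ≤ (A a j - A b j) * v j := fun j _ =>
    mul_nonneg (sub_nonneg.mpr (hdom j)) (hv.1 j)
  have hzero := (Finset.sum_eq_zero_iff_of_nonneg hterm).mp hsum b (Finset.mem_univ b)
  rw [hbeats, hA.1 b, sub_zero, one_mul] at hzero
  exact (hpos b).ne' hzero
end

section
/- Let n ≥ 1 and let A be the imbalanced (2n+1)-RPS tournament payoff matrix. Define v by v (r i) = v (p i) = 3^(-i) for 1 ≤ i ≤ n and v s = 3^(-n). Then v is a probability vector (entries nonnegative summing to 1), v is everywhere positive, and A.mulVec v = 0. Hence the imbalanced (2n+1)-RPS is playable, and v is its unique Nash equilibrium strategy. -/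
open Matrix

/-- Vertices of the imbalanced `(2n+1)`-RPS: `Sum.inl i` is `r (i+1)`,
`Sum.inr (Sum.inl i)` is `p (i+1)`, and `Sum.inr (Sum.inr ())` is `s`. -/
abbrev ImbVertex (n : ℕ) := Fin n ⊕ Fin n ⊕ Unit

/-- The beats relation of the imbalanced `(2n+1)`-RPS:
`r i` beats `r j` iff `i < j`; `r i` beats `p j` iff `i ≠ j`; `r i` beats `s`;
`p i` beats `r j` iff `j = i`; `p i` beats `p j` iff `j < i`; `s` beats every `p i`. -/
def ImbBeats {n : ℕ} : ImbVertex n → ImbVertex n → Prop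
  | Sum.inl i, Sum.inl j => i < j
  | Sum.inl i, Sum.inr (Sum.inl j) => i ≠ j
  | Sum.inl _, Sum.inr (Sum.inr _) => True
  | Sum.inr (Sum.inl i), Sum.inl j => j = i
  | Sum.inr (Sum.inl i), Sum.inr (Sum.inl j) => j < i
  | Sum.inr (Sum.inl _), Sum.inr (Sum.inr _) => False
  | Sum.inr (Sum.inr _), Sum.inl _ => False
  | Sum.inr (Sum.inr _), Sum.inr (Sum.inl _) => True
  | Sum.inr (Sum.inr _), Sum.inr (Sum.inr _) => False

/-- The payoff matrix of the imbalanced `(2n+1)`-RPS. -/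
noncomputable def ImbRPS (n : ℕ) : Matrix (ImbVertex n) (ImbVertex n) ℝ :=
  Matrix.of fun a b => by
    classical exact if ImbBeats a b then 1 else if ImbBeats b a then -1 else 0

/-- The candidate Nash distribution: `v (r i) = v (p i) = 3⁻ⁱ` (1-based `i`) and
`v s = 3⁻ⁿ`. -/
noncomputable def ImbNash (n : ℕ) : ImbVertex n → ℝ
  | Sum.inl i => ((3 : ℝ))⁻¹ ^ ((i : ℕ) + 1)
  | Sum.inr (Sum.inl i) => ((3 : ℝ))⁻¹ ^ ((i : ℕ) + 1)
  | Sum.inr (Sum.inr _) => ((3 : ℝ))⁻¹ ^ n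

/-!
Write `x i`, `y i`, `z` for the weights that `w` puts on `r i`, `p i`, `s`. Adding and
subtracting the rows of `r i` and `p i` in `A w = 0` gives
`x i - y i = 2 ∑_{j < i} (x j - y j)` and `x i + y i = 2 ∑_{j > i} (x j + y j) + 2 z`.
If `z = 0`, the first relation forces `x = y` by induction upwards and the second forces
`x + y = 0` by induction downwards, so a kernel vector vanishing at `s` is zero. Hence the
kernel of `A` is at most a line; `v` lies on it by a geometric sum, and it is the only
probability vector on that line.
-/

open Finset

theorem eq_zero_of_forall_eq_mul_sum {α R : Type*} [NonUnitalNonAssocSemiring R]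
    {r : α → α → Prop} (hr : WellFounded r) {s : α → Finset α} (hs : ∀ i, ∀ j ∈ s i, r j i)
    {f : α → R} (c : R) (hf : ∀ i, f i = c * ∑ j ∈ s i, f j) : f = 0 := by
  funext i
  induction i using hr.induction with
  | _ i ih => rw [hf i, sum_eq_zero fun j hj => ih j (hs i j hj), mul_zero, Pi.zero_apply]

theorem two_mul_sum_Ico_inv_three_pow_succ {a b : ℕ} (hab : a ≤ b) :
    2 * ∑ k ∈ Ico a b, (3 : ℝ)⁻¹ ^ (k + 1) = 3⁻¹ ^ a - 3⁻¹ ^ b := by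
  rw [← geom_sum_Ico_mul_neg _ hab]
  simp_rw [pow_succ, ← sum_mul]
  ring

theorem two_mul_sum_Ioi_inv_three_pow_succ {n : ℕ} (i : Fin n) :
    2 * ∑ j ∈ Ioi i, (3 : ℝ)⁻¹ ^ ((j : ℕ) + 1) = 3⁻¹ ^ ((i : ℕ) + 1) - 3⁻¹ ^ n := by
  rw [← two_mul_sum_Ico_inv_three_pow_succ (a := i + 1) i.isLt, Ico_add_one_left_eq_Ioo,
    ← Fin.map_valEmbedding_Ioi, sum_map]
  rfl

namespace ImbNash

variable {n : ℕ}

theorem pos (a : ImbVertex n) : 0 < ImbNash n a := by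
  rcases a with i | i | _ <;> simp only [ImbNash] <;> positivity

theorem sum_eq_one : ∑ a, ImbNash n a = 1 := by
  have h := two_mul_sum_Ico_inv_three_pow_succ (Nat.zero_le n)
  rw [← range_eq_Ico, ← Fin.sum_univ_eq_sum_range (fun k => (3 : ℝ)⁻¹ ^ (k + 1))] at h
  simp only [Fintype.sum_sum_type, ImbNash, Fintype.sum_unique]
  linarith

end ImbNash

namespace ImbRPS

variable {n : ℕ}

theorem apply_of_lt {i j : Fin n} (h : j < i) :
    ImbRPS n (.inl i) (.inl j) = -1 ∧ ImbRPS n (.inl i) (.inr (.inl j)) = 1 ∧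
      ImbRPS n (.inr (.inl i)) (.inl j) = -1 ∧ ImbRPS n (.inr (.inl i)) (.inr (.inl j)) = 1 := by
  simp [ImbRPS, ImbBeats, h, h.ne, h.ne', h.not_gt]

theorem apply_self (i : Fin n) :
    ImbRPS n (.inl i) (.inl i) = 0 ∧ ImbRPS n (.inl i) (.inr (.inl i)) = -1 ∧
      ImbRPS n (.inr (.inl i)) (.inl i) = 1 ∧ ImbRPS n (.inr (.inl i)) (.inr (.inl i)) = 0 := by
  simp [ImbRPS, ImbBeats]

theorem apply_of_gt {i j : Fin n} (h : i < j) :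
    ImbRPS n (.inl i) (.inl j) = 1 ∧ ImbRPS n (.inl i) (.inr (.inl j)) = 1 ∧
      ImbRPS n (.inr (.inl i)) (.inl j) = -1 ∧ ImbRPS n (.inr (.inl i)) (.inr (.inl j)) = -1 := by
  simp [ImbRPS, ImbBeats, h, h.ne, h.ne', h.not_gt]

theorem apply_scissors (i : Fin n) :
    ImbRPS n (.inl i) (.inr (.inr ())) = 1 ∧ ImbRPS n (.inr (.inl i)) (.inr (.inr ())) = -1 := by
  simp [ImbRPS, ImbBeats]

theorem mulVec_apply (w : ImbVertex n → ℝ) (a : ImbVertex n) :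
    (ImbRPS n *ᵥ w) a =
      ∑ j, (ImbRPS n a (.inl j) * w (.inl j) + ImbRPS n a (.inr (.inl j)) * w (.inr (.inl j))) +
        ImbRPS n a (.inr (.inr ())) * w (.inr (.inr ())) := by
  simp [mulVec, dotProduct, Fintype.sum_sum_type, sum_add_distrib, add_assoc]

theorem mulVec_rock_add_paper (w : ImbVertex n → ℝ) (i : Fin n) :
    (ImbRPS n *ᵥ w) (.inl i) + (ImbRPS n *ᵥ w) (.inr (.inl i)) =
      (w (.inl i) - w (.inr (.inl i))) - 2 * ∑ j ∈ Iio i, (w (.inl j) - w (.inr (.inl j))) := by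
  have hcol (j : Fin n) :
      (ImbRPS n (.inl i) (.inl j) * w (.inl j) +
          ImbRPS n (.inl i) (.inr (.inl j)) * w (.inr (.inl j))) +
        (ImbRPS n (.inr (.inl i)) (.inl j) * w (.inl j) +
          ImbRPS n (.inr (.inl i)) (.inr (.inl j)) * w (.inr (.inl j))) =
      (if j = i then w (.inl j) - w (.inr (.inl j)) else 0) -
        (if j < i then 2 * (w (.inl j) - w (.inr (.inl j))) else 0) := by
    rcases lt_trichotomy j i with h | rfl | h
    · obtain ⟨h₁, h₂, h₃, h₄⟩ := apply_of_lt h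
      rw [h₁, h₂, h₃, h₄, if_neg h.ne, if_pos h]
      ring
    · obtain ⟨h₁, h₂, h₃, h₄⟩ := apply_self j
      rw [h₁, h₂, h₃, h₄, if_pos rfl, if_neg (lt_irrefl j)]
      ring
    · obtain ⟨h₁, h₂, h₃, h₄⟩ := apply_of_gt h
      rw [h₁, h₂, h₃, h₄, if_neg h.ne', if_neg h.not_gt]
      ring
  rw [mulVec_apply, mulVec_apply, add_add_add_comm, ← sum_add_distrib,
    sum_congr rfl fun j _ => hcol j, sum_sub_distrib, sum_ite_eq', ← sum_filter,
    filter_gt_eq_Iio, mul_sum, (apply_scissors i).1, (apply_scissors i).2]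
  simp

theorem mulVec_rock_sub_paper (w : ImbVertex n → ℝ) (i : Fin n) :
    (ImbRPS n *ᵥ w) (.inl i) - (ImbRPS n *ᵥ w) (.inr (.inl i)) =
      2 * ∑ j ∈ Ioi i, (w (.inl j) + w (.inr (.inl j))) + 2 * w (.inr (.inr ())) -
        (w (.inl i) + w (.inr (.inl i))) := by
  have hcol (j : Fin n) :
      (ImbRPS n (.inl i) (.inl j) * w (.inl j) +
          ImbRPS n (.inl i) (.inr (.inl j)) * w (.inr (.inl j))) -
        (ImbRPS n (.inr (.inl i)) (.inl j) * w (.inl j) +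
          ImbRPS n (.inr (.inl i)) (.inr (.inl j)) * w (.inr (.inl j))) =
      (if i < j then 2 * (w (.inl j) + w (.inr (.inl j))) else 0) -
        (if j = i then w (.inl j) + w (.inr (.inl j)) else 0) := by
    rcases lt_trichotomy j i with h | rfl | h
    · obtain ⟨h₁, h₂, h₃, h₄⟩ := apply_of_lt h
      rw [h₁, h₂, h₃, h₄, if_neg h.not_gt, if_neg h.ne]
      ring
    · obtain ⟨h₁, h₂, h₃, h₄⟩ := apply_self j
      rw [h₁, h₂, h₃, h₄, if_neg (lt_irrefl j), if_pos rfl]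
      ring
    · obtain ⟨h₁, h₂, h₃, h₄⟩ := apply_of_gt h
      rw [h₁, h₂, h₃, h₄, if_pos h, if_neg h.ne']
      ring
  rw [mulVec_apply, mulVec_apply, add_sub_add_comm, ← sum_sub_distrib,
    sum_congr rfl fun j _ => hcol j, sum_sub_distrib, sum_ite_eq', ← sum_filter,
    filter_lt_eq_Ioi, mul_sum, (apply_scissors i).1, (apply_scissors i).2, if_pos (mem_univ i)]
  ring

theorem mulVec_scissors (w : ImbVertex n → ℝ) :
    (ImbRPS n *ᵥ w) (.inr (.inr ())) = ∑ j, w (.inr (.inl j)) - ∑ j, w (.inl j) := by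
  rw [mulVec_apply]
  simp [ImbRPS, ImbBeats, neg_add_eq_sub]

theorem mulVec_imbNash : ImbRPS n *ᵥ ImbNash n = 0 := by
  have hrow (i : Fin n) : (ImbRPS n *ᵥ ImbNash n) (.inl i) = 0 ∧
      (ImbRPS n *ᵥ ImbNash n) (.inr (.inl i)) = 0 := by
    have hadd := mulVec_rock_add_paper (ImbNash n) i
    have hsub := mulVec_rock_sub_paper (ImbNash n) i
    have hgeom := two_mul_sum_Ioi_inv_three_pow_succ i
    simp only [ImbNash, sub_self, sum_const_zero, mul_zero, ← two_mul, ← mul_sum] at hadd hsub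
    constructor <;> linarith
  funext a
  rcases a with i | i | ⟨⟨⟩⟩
  · exact (hrow i).1
  · exact (hrow i).2
  · simp [mulVec_scissors, ImbNash]

theorem eq_zero_of_mulVec_eq_zero {d : ImbVertex n → ℝ} (hd : ImbRPS n *ᵥ d = 0)
    (hs : d (.inr (.inr ())) = 0) : d = 0 := by
  have hrow (a) : (ImbRPS n *ᵥ d) a = 0 := by rw [hd, Pi.zero_apply]
  have hsub : (fun i => d (.inl i) - d (.inr (.inl i))) = 0 :=
    eq_zero_of_forall_eq_mul_sum wellFounded_lt (fun _ _ => mem_Iio.1) 2 fun i => by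
      linarith [mulVec_rock_add_paper d i, hrow (.inl i), hrow (.inr (.inl i))]
  have hadd : (fun i => d (.inl i) + d (.inr (.inl i))) = 0 :=
    eq_zero_of_forall_eq_mul_sum wellFounded_gt (fun _ _ => mem_Ioi.1) 2 fun i => by
      linarith [mulVec_rock_sub_paper d i, hrow (.inl i), hrow (.inr (.inl i))]
  simp only [funext_iff, Pi.zero_apply] at hsub hadd
  funext a
  rw [Pi.zero_apply]
  rcases a with i | i | ⟨⟨⟩⟩
  · linarith [hsub i, hadd i]
  · linarith [hsub i, hadd i]
  · exact hs

theorem eq_smul_imbNash_of_mulVec_eq_zero {w : ImbVertex n → ℝ} (hw : ImbRPS n *ᵥ w = 0) :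
    w = (3 ^ n * w (.inr (.inr ()))) • ImbNash n := by
  rw [← sub_eq_zero]
  apply eq_zero_of_mulVec_eq_zero
  · rw [mulVec_sub, mulVec_smul, hw, mulVec_imbNash, smul_zero, sub_zero]
  · simp only [Pi.sub_apply, Pi.smul_apply, smul_eq_mul, ImbNash]
    rw [mul_right_comm, ← mul_pow, mul_inv_cancel₀ three_ne_zero, one_pow, one_mul, sub_self]

end ImbRPS

theorem imbalanced_RPS_playable_general (n : ℕ) :
    (∀ a, 0 ≤ ImbNash n a) ∧ (∑ a, ImbNash n a) = 1 ∧ (∀ a, 0 < ImbNash n a) ∧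
      (ImbRPS n).mulVec (ImbNash n) = 0 ∧
      (∀ w : ImbVertex n → ℝ, (∀ a, 0 ≤ w a) → (∑ a, w a) = 1 →
        (ImbRPS n).mulVec w = 0 → w = ImbNash n) := by
  refine ⟨fun a => (ImbNash.pos a).le, ImbNash.sum_eq_one, ImbNash.pos, ImbRPS.mulVec_imbNash,
    fun w _ hsum hw => ?_⟩
  have hw_eq := ImbRPS.eq_smul_imbNash_of_mulVec_eq_zero hw
  have hc : 3 ^ n * w (.inr (.inr ())) = 1 := by
    simpa only [Pi.smul_apply, smul_eq_mul, ← mul_sum, ImbNash.sum_eq_one, mul_one, hsum,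
      eq_comm] using congrArg (fun v => ∑ a, v a) hw_eq
  rw [hw_eq, hc, one_smul]

/-- The distribution `ImbNash n` is a probability vector, everywhere positive, and is a
kernel vector of the imbalanced `(2n+1)`-RPS payoff matrix; hence the imbalanced
`(2n+1)`-RPS is playable, and `ImbNash n` is its unique Nash equilibrium strategy. -/
theorem imbalanced_RPS_playable (n : ℕ) (hn : 1 ≤ n) :
    (∀ a, 0 ≤ ImbNash n a) ∧ (∑ a, ImbNash n a) = 1 ∧ (∀ a, 0 < ImbNash n a) ∧
      (ImbRPS n).mulVec (ImbNash n) = 0 ∧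
      (∀ w : ImbVertex n → ℝ, (∀ a, 0 ≤ w a) → (∑ a, w a) = 1 →
        (ImbRPS n).mulVec w = 0 → w = ImbNash n) :=
  imbalanced_RPS_playable_general n
end

section
/- Let n ≥ 1 and let A, B be tournament payoff matrices of size 2n+1 with in-degree functions d⁻_A, d⁻_B and out-degree functions d⁺_A, d⁺_B. Suppose that for every k with 1 ≤ k ≤ n, the sum of the k smallest values of d⁻_A is strictly less than the sum of the k smallest values of d⁻_B, and the sum of the k smallest values of d⁺_A is strictly less than the sum of the k smallest values of d⁺_B. Then the in-degree sequence of A strictly majorizes that of B: for every m with 1 ≤ m ≤ 2n, the sum of the m largest values of d⁻_A is strictly greater than the sum of the m largest values of d⁻_B (and the total sums are equal, both being n(2n+1)). -/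
open Matrix

/-- The in-degree of vertex `i`: the number of vertices beating `i`. -/
noncomputable def inDeg {m : ℕ} (A : Matrix (Fin m) (Fin m) ℝ) (i : Fin m) : ℝ :=
  (Finset.univ.filter fun j => A i j = -1).card

/-- The out-degree of vertex `i`: the number of vertices `i` beats. -/
noncomputable def outDeg {m : ℕ} (A : Matrix (Fin m) (Fin m) ℝ) (i : Fin m) : ℝ :=
  (Finset.univ.filter fun j => A i j = 1).card

/-- The sum of the `k` largest values of `x`. -/
noncomputable def topSum {m : ℕ} (x : Fin m → ℝ) (k : ℕ) : ℝ :=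
  sSup ((fun s : Finset (Fin m) => ∑ i ∈ s, x i) '' {s | s.card = k})

/-- The sum of the `k` smallest values of `x`. -/
noncomputable def botSum {m : ℕ} (x : Fin m → ℝ) (k : ℕ) : ℝ :=
  sInf ((fun s : Finset (Fin m) => ∑ i ∈ s, x i) '' {s | s.card = k})

/-!
The hypotheses only speak about the `k ≤ n` smallest degrees, and two identities carry them to
every top sum of in-degrees. In a tournament on `2n + 1` vertices `d⁻(i) = 2n - d⁺(i)`, so the
`m` largest in-degrees sum to `2nm` minus the `m` smallest out-degrees; this settles `m ≤ n`.
The in-degrees always sum to `n(2n + 1)`, so the `m` largest in-degrees sum to `n(2n + 1)` minus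
the `2n + 1 - m` smallest ones; this settles `n < m ≤ 2n`.
-/

section PartialSums

variable {M : ℕ} (x : Fin M → ℝ)

lemma finite_image_sum_card_eq (k : ℕ) :
    ((fun s : Finset (Fin M) => ∑ i ∈ s, x i) '' {s | s.card = k}).Finite :=
  (Set.toFinite _).image _

lemma nonempty_image_sum_card_eq {k : ℕ} (hk : k ≤ M) :
    ((fun s : Finset (Fin M) => ∑ i ∈ s, x i) '' {s | s.card = k}).Nonempty := by
  obtain ⟨s, -, hs⟩ := Finset.exists_subset_card_eq (s := (Finset.univ : Finset (Fin M))) (n := k)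
    (by simpa using hk)
  exact ⟨_, s, hs, rfl⟩

lemma exists_card_eq_topSum_eq {k : ℕ} (hk : k ≤ M) :
    ∃ s : Finset (Fin M), s.card = k ∧ topSum x k = ∑ i ∈ s, x i := by
  obtain ⟨s, hs, hsum⟩ := (nonempty_image_sum_card_eq x hk).csSup_mem (finite_image_sum_card_eq x k)
  exact ⟨s, hs, hsum.symm⟩

lemma exists_card_eq_botSum_eq {k : ℕ} (hk : k ≤ M) :
    ∃ s : Finset (Fin M), s.card = k ∧ botSum x k = ∑ i ∈ s, x i := by
  obtain ⟨s, hs, hsum⟩ := (nonempty_image_sum_card_eq x hk).csInf_mem (finite_image_sum_card_eq x k)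
  exact ⟨s, hs, hsum.symm⟩

lemma sum_le_topSum {k : ℕ} {s : Finset (Fin M)} (hs : s.card = k) :
    ∑ i ∈ s, x i ≤ topSum x k :=
  le_csSup (finite_image_sum_card_eq x k).bddAbove ⟨s, hs, rfl⟩

lemma botSum_le_sum {k : ℕ} {s : Finset (Fin M)} (hs : s.card = k) :
    botSum x k ≤ ∑ i ∈ s, x i :=
  csInf_le (finite_image_sum_card_eq x k).bddBelow ⟨s, hs, rfl⟩

/-- Complementation swaps the `k`-subsets with the `(M - k)`-subsets. -/
lemma topSum_add_botSum_sub {k : ℕ} (hk : k ≤ M) :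
    topSum x k + botSum x (M - k) = ∑ i, x i := by
  obtain ⟨s, hs, htop⟩ := exists_card_eq_topSum_eq x hk
  obtain ⟨t, ht, hbot⟩ := exists_card_eq_botSum_eq x (Nat.sub_le M k)
  have hbot_le : botSum x (M - k) ≤ ∑ i ∈ sᶜ, x i :=
    botSum_le_sum x (by simp [Finset.card_compl, hs])
  have hle_top : ∑ i ∈ tᶜ, x i ≤ topSum x k :=
    sum_le_topSum x (by simp [Finset.card_compl, ht]; omega)
  have hs_split := Finset.sum_compl_add_sum s x
  have ht_split := Finset.sum_compl_add_sum t x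
  linarith

lemma topSum_const_sub (c : ℝ) {k : ℕ} (hk : k ≤ M) :
    topSum (fun i => c - x i) k = c * k - botSum x k := by
  have hsum : ∀ s : Finset (Fin M), s.card = k → ∑ i ∈ s, (c - x i) = c * k - ∑ i ∈ s, x i := by
    intro s hs
    rw [Finset.sum_sub_distrib, Finset.sum_const, hs, nsmul_eq_mul, mul_comm]
  obtain ⟨s, hs, htop⟩ := exists_card_eq_topSum_eq (fun i => c - x i) hk
  obtain ⟨t, ht, hbot⟩ := exists_card_eq_botSum_eq x hk
  have hbot_le := botSum_le_sum x hs
  have hle_top := sum_le_topSum (fun i => c - x i) ht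
  rw [hsum s hs] at htop
  rw [hsum t ht] at hle_top
  linarith

end PartialSums

namespace IsTournament

variable {M : ℕ} {A : Matrix (Fin M) (Fin M) ℝ}

lemma eq_neg_one_iff (hA : IsTournament A) (i j : Fin M) : A i j = -1 ↔ A j i = 1 := by
  by_cases hij : i = j
  · subst hij
    norm_num [hA.1 i]
  · rw [(hA.2 i j hij).2]
    constructor <;> intro h <;> linarith

lemma inDeg_add_outDeg (hA : IsTournament A) (i : Fin M) :
    inDeg A i + outDeg A i = M - 1 := by
  have hin : Finset.univ.filter (fun j => A i j = -1) =
      (Finset.univ.erase i).filter (fun j => ¬ A i j = 1) := by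
    ext j
    by_cases hij : j = i
    · subst hij
      norm_num [hA.1 j]
    · rcases (hA.2 i j (Ne.symm hij)).1 with h | h <;> norm_num [h, hij]
  have hout : Finset.univ.filter (fun j => A i j = 1) =
      (Finset.univ.erase i).filter (fun j => A i j = 1) := by
    ext j
    by_cases hij : j = i
    · subst hij
      norm_num [hA.1 j]
    · simp [hij]
  have hcard := Finset.card_filter_add_card_filter_not (s := Finset.univ.erase i)
    (fun j => A i j = 1)
  rw [Finset.card_erase_of_mem (Finset.mem_univ i), Finset.card_univ, Fintype.card_fin] at hcard
  rw [inDeg, outDeg, hin, hout, ← Nat.cast_add, add_comm, hcard, Nat.cast_pred i.pos]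

lemma sum_inDeg_eq_sum_outDeg (hA : IsTournament A) :
    ∑ i, inDeg A i = ∑ i, outDeg A i := by
  simp only [inDeg, outDeg, hA.eq_neg_one_iff, ← Finset.sum_boole]
  exact Finset.sum_comm

lemma inDeg_eq_sub_outDeg (hA : IsTournament A) : inDeg A = fun i => (M - 1 : ℝ) - outDeg A i :=
  funext fun i => by linarith [hA.inDeg_add_outDeg i]

lemma two_mul_sum_inDeg (hA : IsTournament A) : 2 * ∑ i, inDeg A i = M * (M - 1) := by
  rw [two_mul]
  nth_rewrite 2 [hA.sum_inDeg_eq_sum_outDeg]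
  rw [← Finset.sum_add_distrib]
  simp only [hA.inDeg_add_outDeg, Finset.sum_const, Finset.card_univ, Fintype.card_fin, nsmul_eq_mul]

lemma topSum_inDeg (hA : IsTournament A) {k : ℕ} (hk : k ≤ M) :
    topSum (inDeg A) k = (M - 1) * k - botSum (outDeg A) k := by
  rw [hA.inDeg_eq_sub_outDeg]
  exact topSum_const_sub _ _ hk

lemma sum_inDeg_of_odd {n : ℕ} {A : Matrix (Fin (2 * n + 1)) (Fin (2 * n + 1)) ℝ}
    (hA : IsTournament A) : ∑ i, inDeg A i = n * (2 * n + 1) := by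
  have h := hA.two_mul_sum_inDeg
  push_cast at h
  linarith

end IsTournament

theorem min_degree_sums_imply_strict_majorization_general (n : ℕ)
    (A B : Matrix (Fin (2 * n + 1)) (Fin (2 * n + 1)) ℝ)
    (hA : IsTournament A) (hB : IsTournament B)
    (hmin : ∀ k : ℕ, 1 ≤ k → k ≤ n →
      botSum (inDeg A) k < botSum (inDeg B) k ∧
      botSum (outDeg A) k < botSum (outDeg B) k) :
    ((∑ i, inDeg A i) = (n : ℝ) * (2 * n + 1) ∧
      (∑ i, inDeg B i) = (n : ℝ) * (2 * n + 1)) ∧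
    ∀ m : ℕ, 1 ≤ m → m ≤ 2 * n → topSum (inDeg B) m < topSum (inDeg A) m := by
  refine ⟨⟨hA.sum_inDeg_of_odd, hB.sum_inDeg_of_odd⟩, fun m hm1 hm2 => ?_⟩
  rcases le_or_gt m n with hmn | hnm
  · rw [hA.topSum_inDeg (by omega), hB.topSum_inDeg (by omega)]
    linarith [(hmin m hm1 hmn).2]
  · have hsplitA := topSum_add_botSum_sub (inDeg A) (k := m) (by omega)
    have hsplitB := topSum_add_botSum_sub (inDeg B) (k := m) (by omega)
    rw [hA.sum_inDeg_of_odd] at hsplitA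
    rw [hB.sum_inDeg_of_odd] at hsplitB
    linarith [(hmin (2 * n + 1 - m) (by omega) (by omega)).1]

/-- If for all `1 ≤ k ≤ n` a `(2n+1)`-tournament `A` has strictly smaller sums of the
`k` smallest in-degrees and of the `k` smallest out-degrees than a tournament `B`,
then the in-degree sequence of `A` strictly majorizes that of `B`: the total sums are
equal (both `n(2n+1)`) and every top-`m` partial sum for `A` strictly exceeds that for
`B`, for `1 ≤ m ≤ 2n`. -/
theorem min_degree_sums_imply_strict_majorization (n : ℕ) (hn : 1 ≤ n)
    (A B : Matrix (Fin (2 * n + 1)) (Fin (2 * n + 1)) ℝ)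
    (hA : IsTournament A) (hB : IsTournament B)
    (hmin : ∀ k : ℕ, 1 ≤ k → k ≤ n →
      botSum (inDeg A) k < botSum (inDeg B) k ∧
      botSum (outDeg A) k < botSum (outDeg B) k) :
    ((∑ i, inDeg A i) = (n : ℝ) * (2 * n + 1) ∧
      (∑ i, inDeg B i) = (n : ℝ) * (2 * n + 1)) ∧
    ∀ m : ℕ, 1 ≤ m → m ≤ 2 * n → topSum (inDeg B) m < topSum (inDeg A) m :=
  min_degree_sums_imply_strict_majorization_general n A B hA hB hmin
end

section
/- Let n ≥ 1 and let A be any playable tournament payoff matrix of size 2n+1 with in-degree function d⁻. Let D be the in-degree multiset of the imbalanced (2n+1)-RPS, namely the multiset {1, 2, …, 2n-1} together with two extra copies of n (descending: 2n-1, 2n-2, …, n+1, n, n, n, n-1, …, 1). Then D majorizes the in-degree sequence of A: for every k with 1 ≤ k ≤ 2n+1, the sum of the k largest elements of D is ≥ the sum of the k largest values of d⁻ (and both total sums equal n(2n+1)). Moreover, if the in-degree multiset of A is not equal to D, then some such top-k inequality is strict (strict majorization). -/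
open Matrix

/-- A tournament payoff matrix is playable if it admits a totally mixed symmetric Nash
equilibrium. -/
def Playable {m : ℕ} (A : Matrix (Fin m) (Fin m) ℝ) : Prop :=
  ∃ v : Fin m → ℝ, IsProbVec v ∧ A.mulVec v = 0 ∧ ∀ i, 0 < v i

/-- The in-degree multiset of the imbalanced `(2n+1)`-RPS, listed in descending order:
`2n-1, 2n-2, …, n+1, n, n, n, n-1, …, 1` (i.e. `{1, 2, …, 2n-1}` together with two
extra copies of `n`). -/
noncomputable def imbInDegSeq (n : ℕ) : Fin (2 * n + 1) → ℝ := fun i =>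
  if (i : ℕ) + 1 < n then 2 * (n : ℝ) - 1 - (i : ℕ)
  else if (i : ℕ) < n + 2 then (n : ℝ)
  else 2 * (n : ℝ) + 1 - (i : ℕ)

theorem filt_eq (m k : ℕ) (h : k ≤ m) :
    (Finset.univ.filter fun i : Fin m => (i : ℕ) < k) = Finset.map (Fin.castLEEmb h) Finset.univ := by
  ext i
  simp only [Finset.mem_filter, Finset.mem_univ, true_and, Finset.mem_map]
  constructor
  · intro hi; exact ⟨Fin.mk (i:ℕ) hi, Fin.ext (by simp)⟩
  · rintro ⟨j, -, rfl⟩; exact j.isLt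
theorem filt_card (m k : ℕ) (h : k ≤ m) :
    (Finset.univ.filter fun i : Fin m => (i : ℕ) < k).card = k := by
  rw [filt_eq m k h, Finset.card_map, Finset.card_univ, Fintype.card_fin]
theorem filt_succ (m k : ℕ) (hk : k < m) :
    (Finset.univ.filter fun i : Fin m => (i : ℕ) < k + 1)
      = insert ⟨k, hk⟩ (Finset.univ.filter fun i : Fin m => (i : ℕ) < k) := by
  ext i
  simp only [Finset.mem_filter, Finset.mem_univ, true_and, Finset.mem_insert, Fin.ext_iff]
  omega

theorem sm_le {k : ℕ} (g : Fin k → ℕ) (hg : StrictMono g) : ∀ j : Fin k, (j : ℕ) ≤ g j := by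
  have H : ∀ r : ℕ, ∀ j : Fin k, (j : ℕ) = r → r ≤ g j := by
    intro r
    induction r with
    | zero => intro j _; exact Nat.zero_le _
    | succ r ih =>
      intro j hj
      have hrk : r < k := by omega
      have hlt : (⟨r, hrk⟩ : Fin k) < j := by simp [Fin.lt_def]; omega
      have := ih ⟨r, hrk⟩ rfl
      have := hg hlt
      omega
  intro j; exact H (j : ℕ) j rfl

theorem antitone_topk {m : ℕ} (y : Fin m → ℝ) (hy : Antitone y) (T : Finset (Fin m)) :
    ∑ i ∈ T, y i ≤ ∑ i ∈ Finset.univ.filter fun i : Fin m => (i : ℕ) < T.card, y i := by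
  classical
  set k := T.card with hk
  have hkm : k ≤ m := by
    simpa using Finset.card_le_card (Finset.subset_univ T)
  have f := T.orderIsoOfFin hk.symm
  have hsum : ∑ i ∈ T, y i = ∑ j : Fin k, y (f j : Fin m) := by
    rw [← Finset.sum_coe_sort T y]
    exact (Equiv.sum_comp f.toEquiv (fun x => y (x : Fin m))).symm
  have hsum2 : ∑ i ∈ Finset.univ.filter (fun i : Fin m => (i : ℕ) < k), y i
      = ∑ j : Fin k, y (Fin.castLEEmb hkm j) := by
    rw [filt_eq m k hkm, Finset.sum_map]
  rw [hsum, hsum2]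
  apply Finset.sum_le_sum
  intro j _
  apply hy
  have hmono : StrictMono fun j : Fin k => (((f j) : Fin m) : ℕ) := by
    intro a b hab
    have : f a < f b := (OrderIso.lt_iff_lt f).2 hab
    exact this
  have := sm_le _ hmono j
  simp [Fin.le_def, Fin.castLEEmb, Fin.castLE]
  exact this

theorem topSet_finite {m : ℕ} (x : Fin m → ℝ) (k : ℕ) :
    ((fun s : Finset (Fin m) => ∑ i ∈ s, x i) '' {s | s.card = k}).Finite :=
  Set.Finite.image _ (Set.toFinite _)

theorem topSet_nonempty {m : ℕ} (x : Fin m → ℝ) (k : ℕ) (hk : k ≤ m) :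
    ((fun s : Finset (Fin m) => ∑ i ∈ s, x i) '' {s | s.card = k}).Nonempty := by
  obtain ⟨t, -, ht⟩ := Finset.exists_subset_card_eq (s := (Finset.univ : Finset (Fin m))) (n := k)
    (by simpa using hk)
  exact ⟨∑ i ∈ t, x i, t, ht, rfl⟩

theorem topSum_le {m : ℕ} (x : Fin m → ℝ) (k : ℕ) (hk : k ≤ m) (b : ℝ)
    (hb : ∀ S : Finset (Fin m), S.card = k → ∑ i ∈ S, x i ≤ b) : topSum x k ≤ b := by
  apply csSup_le (topSet_nonempty x k hk)
  rintro r ⟨S, hS, rfl⟩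
  exact hb S hS

theorem le_topSum {m : ℕ} (x : Fin m → ℝ) (k : ℕ) (S : Finset (Fin m)) (hS : S.card = k) :
    ∑ i ∈ S, x i ≤ topSum x k :=
  le_csSup (topSet_finite x k).bddAbove ⟨S, hS, rfl⟩

theorem topSum_attained {m : ℕ} (x : Fin m → ℝ) (k : ℕ) (hk : k ≤ m) :
    ∃ S : Finset (Fin m), S.card = k ∧ topSum x k = ∑ i ∈ S, x i := by
  have := Set.Nonempty.csSup_mem (topSet_nonempty x k hk) (topSet_finite x k)
  obtain ⟨S, hS, h⟩ := this
  exact ⟨S, hS, h.symm⟩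

theorem card_filter_prod {α β : Type*} [DecidableEq α] [DecidableEq β] (S : Finset α) (T : Finset β)
    (p : α → β → Prop) [∀ a b, Decidable (p a b)] :
    ((S ×ˢ T).filter fun q => p q.1 q.2).card = ∑ i ∈ S, (T.filter (p i)).card := by
  rw [Finset.card_filter]
  rw [Finset.sum_product' S T (fun a b => if p a b then (1:ℕ) else 0)]
  congr 1
  ext i
  rw [Finset.card_filter]

section Tour
variable {m : ℕ}

/-- number of edges within S (as in-edges counted from ordered pairs) -/
theorem within_card (A : Matrix (Fin m) (Fin m) ℝ) (hA : IsTournament A) (S : Finset (Fin m)) :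
    2 * ((S ×ˢ S).filter fun q => A q.1 q.2 = -1).card = S.card * S.card - S.card := by
  classical
  set P := (S ×ˢ S).filter fun q => A q.1 q.2 = -1 with hP
  have hPsub : P ⊆ S.offDiag := by
    intro q hq
    simp only [hP, Finset.mem_filter, Finset.mem_product] at hq
    refine Finset.mem_offDiag.2 ⟨hq.1.1, hq.1.2, ?_⟩
    intro h
    rw [h] at hq
    have := hA.1 q.2
    rw [hq.2] at this; norm_num at this
  have hswap : S.offDiag = P ∪ P.image Prod.swap := by
    ext q
    simp only [Finset.mem_union, Finset.mem_image, hP, Finset.mem_filter, Finset.mem_product,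
      Finset.mem_offDiag]
    constructor
    · rintro ⟨h1, h2, h3⟩
      rcases (hA.2 q.2 q.1 (Ne.symm h3)).1 with h | h
      · left; exact ⟨⟨h1, h2⟩, by rw [(hA.2 q.2 q.1 (Ne.symm h3)).2, h]⟩
      · right
        exact ⟨⟨q.2, q.1⟩, ⟨⟨h2, h1⟩, h⟩, rfl⟩
    · rintro (⟨⟨h1, h2⟩, h3⟩ | ⟨r, ⟨⟨h1, h2⟩, h3⟩, hr⟩)
      · refine ⟨h1, h2, ?_⟩
        intro h; rw [h] at h3; have := hA.1 q.2; rw [h3] at this; norm_num at this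
      · subst hr
        refine ⟨h2, h1, ?_⟩
        intro h
        simp only [Prod.swap] at h
        have : r.1 = r.2 := h.symm
        rw [this] at h3; have := hA.1 r.2; rw [h3] at this; norm_num at this
  have hdisj : Disjoint P (P.image Prod.swap) := by
    rw [Finset.disjoint_left]
    rintro q hq hq'
    simp only [hP, Finset.mem_filter, Finset.mem_product] at hq
    simp only [Finset.mem_image, hP, Finset.mem_filter, Finset.mem_product] at hq'
    obtain ⟨r, ⟨-, h3⟩, hr⟩ := hq'
    subst hr
    have hne : r.2 ≠ r.1 := by
      intro h; rw [h] at h3; have := hA.1 r.1; rw [h3] at this; norm_num at this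
    have := (hA.2 r.1 r.2 (Ne.symm hne)).2
    simp only [Prod.swap] at hq
    rw [hq.2, h3] at this
    norm_num at this
  have hcard : P.card = (P.image Prod.swap).card := by
    rw [Finset.card_image_of_injective _ Prod.swap_injective]
  have := Finset.offDiag_card S
  rw [hswap, Finset.card_union_of_disjoint hdisj, ← hcard] at this
  omega
end Tour

theorem quad_zero {m : ℕ} (A : Matrix (Fin m) (Fin m) ℝ) (hA : IsTournament A)
    (v : Fin m → ℝ) (U : Finset (Fin m)) :
    ∑ i ∈ U, ∑ j ∈ U, v i * A i j * v j = 0 := by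
  have hskew : ∀ i j : Fin m, A j i = -A i j := by
    intro i j
    by_cases h : i = j
    · subst h; rw [hA.1]; ring
    · exact (hA.2 i j h).2
  have h1 : ∑ i ∈ U, ∑ j ∈ U, v i * A i j * v j
      = ∑ i ∈ U, ∑ j ∈ U, v j * A j i * v i := Finset.sum_comm
  have h2 : ∑ i ∈ U, ∑ j ∈ U, v j * A j i * v i
      = -∑ i ∈ U, ∑ j ∈ U, v i * A i j * v j := by
    rw [← Finset.sum_neg_distrib]
    apply Finset.sum_congr rfl
    intro i _
    rw [← Finset.sum_neg_distrib]
    apply Finset.sum_congr rfl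
    intro j _
    rw [hskew i j]; ring
  linarith [h1, h2, h1 ▸ h2]

theorem key_lemma {m : ℕ} (A : Matrix (Fin m) (Fin m) ℝ) (hA : IsTournament A)
    (v : Fin m → ℝ) (hv0 : ∀ i, 0 < v i) (hAv : A.mulVec v = 0) (S : Finset (Fin m)) :
    min S.card Sᶜ.card ≤ ((S ×ˢ Sᶜ).filter fun q => A q.1 q.2 = 1).card := by
  classical
  by_contra hcon
  push_neg at hcon
  rw [lt_min_iff] at hcon
  obtain ⟨he1, he2⟩ := hcon
  set Qout := (S ×ˢ Sᶜ).filter fun q => A q.1 q.2 = 1 with hQout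
  set X := Qout.image Prod.fst with hX
  set Y := Qout.image Prod.snd with hY
  have hXS : X ⊆ S := by
    intro i hi
    simp only [hX, Finset.mem_image] at hi
    obtain ⟨q, hq, rfl⟩ := hi
    simp only [hQout, Finset.mem_filter, Finset.mem_product] at hq
    exact hq.1.1
  have hYC : Y ⊆ Sᶜ := by
    intro j hj
    simp only [hY, Finset.mem_image] at hj
    obtain ⟨q, hq, rfl⟩ := hj
    simp only [hQout, Finset.mem_filter, Finset.mem_product] at hq
    exact hq.1.2
  set T := S \ X with hT
  set W := Sᶜ \ Y with hW
  have hTcard : 0 < T.card := by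
    have h1 : X.card ≤ Qout.card := Finset.card_image_le
    have h2 : T.card = S.card - X.card := Finset.card_sdiff_of_subset hXS
    have h3 : Qout.card < S.card := he1
    omega
  have hWcard : 0 < W.card := by
    have h1 : Y.card ≤ Qout.card := Finset.card_image_le
    have h2 : W.card = Sᶜ.card - Y.card := Finset.card_sdiff_of_subset hYC
    have h3 : Qout.card < Sᶜ.card := he2
    omega
  have hTne : T.Nonempty := Finset.card_pos.1 hTcard
  have hWne : W.Nonempty := Finset.card_pos.1 hWcard
  have hne_of : ∀ i ∈ S, ∀ j ∈ Sᶜ, i ≠ j := by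
    intro i hi j hj h
    rw [Finset.mem_compl] at hj
    exact hj (h ▸ hi)
  have hTprop : ∀ i ∈ T, ∀ j ∈ Sᶜ, A i j = -1 := by
    intro i hi j hj
    have hiS : i ∈ S := (Finset.mem_sdiff.1 hi).1
    have hiX : i ∉ X := (Finset.mem_sdiff.1 hi).2
    rcases (hA.2 i j (hne_of i hiS j hj)).1 with h | h
    · exfalso
      apply hiX
      simp only [hX, Finset.mem_image]
      refine ⟨(i, j), ?_, rfl⟩
      simp only [hQout, Finset.mem_filter, Finset.mem_product]
      exact ⟨⟨hiS, hj⟩, h⟩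
    · exact h
  have hWprop : ∀ j ∈ W, ∀ i ∈ S, A j i = 1 := by
    intro j hj i hi
    have hjC : j ∈ Sᶜ := (Finset.mem_sdiff.1 hj).1
    have hjY : j ∉ Y := (Finset.mem_sdiff.1 hj).2
    have hne := hne_of i hi j hjC
    rcases (hA.2 i j hne).1 with h | h
    · exfalso
      apply hjY
      simp only [hY, Finset.mem_image]
      refine ⟨(i, j), ?_, rfl⟩
      simp only [hQout, Finset.mem_filter, Finset.mem_product]
      exact ⟨⟨hi, hjC⟩, h⟩
    · rw [(hA.2 i j hne).2, h]; norm_num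
  -- weights
  set VT := ∑ i ∈ T, v i with hVT
  set VX := ∑ i ∈ X, v i with hVX
  set VS := ∑ i ∈ S, v i with hVS
  set VY := ∑ i ∈ Y, v i with hVY
  set VW := ∑ i ∈ W, v i with hVW
  set VC := ∑ i ∈ Sᶜ, v i with hVC
  have hVTpos : 0 < VT := Finset.sum_pos (fun i _ => hv0 i) hTne
  have hVWpos : 0 < VW := Finset.sum_pos (fun i _ => hv0 i) hWne
  have hTX : Disjoint T X := Finset.sdiff_disjoint
  have hSsplit : T ∪ X = S := by
    rw [hT, Finset.sdiff_union_of_subset hXS]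
  have hWY : Disjoint W Y := Finset.sdiff_disjoint
  have hCsplit : W ∪ Y = Sᶜ := by
    rw [hW, Finset.sdiff_union_of_subset hYC]
  have hVsum1 : VT + VX = VS := by
    rw [hVT, hVX, hVS, ← Finset.sum_union hTX, hSsplit]
  have hVsum2 : VW + VY = VC := by
    rw [hVW, hVY, hVC, ← Finset.sum_union hWY, hCsplit]
  have hrow : ∀ i : Fin m, ∑ j, A i j * v j = 0 := by
    intro i
    have := congrFun hAv i
    simpa [Matrix.mulVec, dotProduct] using this
  have habs : ∀ i j : Fin m, A i j ≤ 1 ∧ -1 ≤ A i j := by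
    intro i j
    by_cases h : i = j
    · subst h; rw [hA.1]; norm_num
    · rcases (hA.2 i j h).1 with h' | h' <;> rw [h'] <;> norm_num
  -- first inequality : VC ≤ VX
  have hE : ∑ i ∈ T, ∑ j, v i * A i j * v j = 0 := by
    apply Finset.sum_eq_zero
    intro i _
    have : ∑ j, v i * A i j * v j = v i * ∑ j, A i j * v j := by
      rw [Finset.mul_sum]
      apply Finset.sum_congr rfl
      intro j _; ring
    rw [this, hrow i, mul_zero]
  have hsplit_univ : ∀ i : Fin m, ∑ j, v i * A i j * v j
      = (∑ j ∈ T, v i * A i j * v j) + (∑ j ∈ X, v i * A i j * v j)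
        + (∑ j ∈ Sᶜ, v i * A i j * v j) := by
    intro i
    have h1 : (Finset.univ : Finset (Fin m)) = (T ∪ X) ∪ Sᶜ := by
      rw [hSsplit, Finset.union_compl]
    rw [h1, Finset.sum_union, Finset.sum_union hTX]
    rw [hSsplit]
    exact disjoint_compl_right
  have hE2 : (∑ i ∈ T, ∑ j ∈ X, v i * A i j * v j) = VT * VC := by
    have hTT := quad_zero A hA v T
    have hTC : ∑ i ∈ T, ∑ j ∈ Sᶜ, v i * A i j * v j = -(VT * VC) := by
      rw [hVT, hVC, Finset.sum_mul_sum]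
      rw [← Finset.sum_neg_distrib]
      apply Finset.sum_congr rfl
      intro i hi
      rw [← Finset.sum_neg_distrib]
      apply Finset.sum_congr rfl
      intro j hj
      rw [hTprop i hi j hj]; ring
    have := hE
    calc ∑ i ∈ T, ∑ j ∈ X, v i * A i j * v j
        = ∑ i ∈ T, ∑ j, v i * A i j * v j - (∑ i ∈ T, ∑ j ∈ T, v i * A i j * v j)
          - ∑ i ∈ T, ∑ j ∈ Sᶜ, v i * A i j * v j := by
          rw [Finset.sum_congr rfl (fun i _ => hsplit_univ i)]
          rw [Finset.sum_add_distrib, Finset.sum_add_distrib]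
          ring
      _ = VT * VC := by rw [hE, hTT, hTC]; ring
  have hle1 : VT * VC ≤ VT * VX := by
    rw [← hE2, hVT, hVX, Finset.sum_mul_sum]
    apply Finset.sum_le_sum
    intro i _
    apply Finset.sum_le_sum
    intro j _
    have h1 := (habs i j).1
    have h2 := (hv0 i).le
    have h3 := (hv0 j).le
    nlinarith [mul_nonneg (mul_nonneg h2 h3) (by linarith : (0:ℝ) ≤ 1 - A i j)]
  have hineq1 : VC ≤ VX := le_of_mul_le_mul_left (by linarith [hle1]) hVTpos
  -- second inequality : VS ≤ VY
  have hF : ∑ j ∈ W, ∑ i, v j * A j i * v i = 0 := by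
    apply Finset.sum_eq_zero
    intro j _
    have : ∑ i, v j * A j i * v i = v j * ∑ i, A j i * v i := by
      rw [Finset.mul_sum]
      apply Finset.sum_congr rfl
      intro i _; ring
    rw [this, hrow j, mul_zero]
  have hsplit_univ2 : ∀ j : Fin m, ∑ i, v j * A j i * v i
      = (∑ i ∈ W, v j * A j i * v i) + (∑ i ∈ Y, v j * A j i * v i)
        + (∑ i ∈ S, v j * A j i * v i) := by
    intro j
    have h1 : (Finset.univ : Finset (Fin m)) = (W ∪ Y) ∪ S := by
      rw [hCsplit, Finset.union_comm, Finset.union_compl]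
    rw [h1, Finset.sum_union, Finset.sum_union hWY]
    rw [hCsplit]
    exact disjoint_compl_left
  have hF2 : (∑ j ∈ W, ∑ i ∈ Y, v j * A j i * v i) = -(VW * VS) := by
    have hWW := quad_zero A hA v W
    have hWS : ∑ j ∈ W, ∑ i ∈ S, v j * A j i * v i = VW * VS := by
      rw [hVW, hVS, Finset.sum_mul_sum]
      apply Finset.sum_congr rfl
      intro j hj
      apply Finset.sum_congr rfl
      intro i hi
      rw [hWprop j hj i hi]; ring
    calc ∑ j ∈ W, ∑ i ∈ Y, v j * A j i * v i
        = ∑ j ∈ W, ∑ i, v j * A j i * v i - (∑ j ∈ W, ∑ i ∈ W, v j * A j i * v i)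
          - ∑ j ∈ W, ∑ i ∈ S, v j * A j i * v i := by
          rw [Finset.sum_congr rfl (fun j _ => hsplit_univ2 j)]
          rw [Finset.sum_add_distrib, Finset.sum_add_distrib]
          ring
      _ = -(VW * VS) := by rw [hF, hWW, hWS]; ring
  have hle2 : -(VW * VY) ≤ -(VW * VS) := by
    rw [← hF2, hVW, hVY, Finset.sum_mul_sum, ← Finset.sum_neg_distrib]
    apply Finset.sum_le_sum
    intro j _
    rw [← Finset.sum_neg_distrib]
    apply Finset.sum_le_sum
    intro i _
    have h1 := (habs j i).2
    have h2 := (hv0 i).le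
    have h3 := (hv0 j).le
    nlinarith [mul_nonneg (mul_nonneg h3 h2) (by linarith : (0:ℝ) ≤ A j i + 1)]
  have hineq2 : VS ≤ VY := by
    have : VW * VS ≤ VW * VY := by linarith
    exact le_of_mul_le_mul_left this hVWpos
  linarith

theorem cross_card {m : ℕ} (A : Matrix (Fin m) (Fin m) ℝ) (hA : IsTournament A)
    (S : Finset (Fin m)) :
    ((S ×ˢ Sᶜ).filter fun q => A q.1 q.2 = -1).card
      + ((S ×ˢ Sᶜ).filter fun q => A q.1 q.2 = 1).card = S.card * Sᶜ.card := by
  classical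
  have hne : ∀ q ∈ S ×ˢ Sᶜ, q.1 ≠ q.2 := by
    intro q hq h
    rw [Finset.mem_product] at hq
    exact (Finset.mem_compl.1 hq.2) (h ▸ hq.1)
  have heq : ((S ×ˢ Sᶜ).filter fun q => A q.1 q.2 = 1)
      = ((S ×ˢ Sᶜ).filter fun q => ¬ (A q.1 q.2 = -1)) := by
    apply Finset.filter_congr
    intro q hq
    rcases (hA.2 q.1 q.2 (hne q hq)).1 with h | h <;> rw [h] <;> norm_num
  rw [heq, Finset.card_filter_add_card_filter_not, Finset.card_product]

theorem sum_inDeg {m : ℕ} (A : Matrix (Fin m) (Fin m) ℝ) (S : Finset (Fin m)) :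
    ∑ i ∈ S, inDeg A i
      = (((S ×ˢ S).filter fun q => A q.1 q.2 = -1).card : ℝ)
        + (((S ×ˢ Sᶜ).filter fun q => A q.1 q.2 = -1).card : ℝ) := by
  classical
  have h1 : ∑ i ∈ S, inDeg A i
      = ((((S ×ˢ (Finset.univ : Finset (Fin m))).filter fun q => A q.1 q.2 = -1).card : ℕ) : ℝ) := by
    rw [card_filter_prod S Finset.univ (fun i j => A i j = -1)]
    push_cast
    rfl
  have h2 : S ×ˢ (Finset.univ : Finset (Fin m)) = S ×ˢ S ∪ S ×ˢ Sᶜ := by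
    rw [← Finset.product_union, Finset.union_compl]
  have hdisj : Disjoint ((S ×ˢ S).filter fun q => A q.1 q.2 = -1)
      ((S ×ˢ Sᶜ).filter fun q => A q.1 q.2 = -1) := by
    apply Finset.disjoint_filter_filter
    rw [Finset.disjoint_left]
    intro q hq hq'
    rw [Finset.mem_product] at hq hq'
    exact (Finset.mem_compl.1 hq'.2) hq.2
  rw [h1, h2, Finset.filter_union, Finset.card_union_of_disjoint hdisj]
  push_cast
  ring

/-- The real closed form of the top-`k` partial sums of the imbalanced RPS in-degrees. -/
noncomputable def Tf (n k : ℕ) : ℝ :=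
  ((k:ℝ) * k - k) / 2 + k * (2 * n + 1 - k) - min (k:ℝ) (2 * n + 1 - k)

theorem subset_bound {n : ℕ} (A : Matrix (Fin (2*n+1)) (Fin (2*n+1)) ℝ) (hA : IsTournament A)
    (v : Fin (2*n+1) → ℝ) (hv0 : ∀ i, 0 < v i) (hAv : A.mulVec v = 0)
    (S : Finset (Fin (2*n+1))) :
    ∑ i ∈ S, inDeg A i ≤ Tf n S.card := by
  classical
  set k := S.card with hk
  set l := Sᶜ.card with hl
  have hkl : k + l = 2 * n + 1 := by
    rw [hk, hl]
    have := Finset.card_add_card_compl S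
    simpa using this
  set P := (S ×ˢ S).filter fun q => A q.1 q.2 = -1 with hP
  set Q := (S ×ˢ Sᶜ).filter fun q => A q.1 q.2 = -1 with hQ
  set e := ((S ×ˢ Sᶜ).filter fun q => A q.1 q.2 = 1).card with he
  have h2P : 2 * P.card = k * k - k := within_card A hA S
  have hQe : Q.card + e = k * l := cross_card A hA S
  have hmine : min k l ≤ e := key_lemma A hA v hv0 hAv S
  have hkk : k ≤ k * k := by
    rcases Nat.eq_zero_or_pos k with h | h
    · simp [h]
    · calc k = k * 1 := by ring
        _ ≤ k * k := Nat.mul_le_mul_left k h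
  have hPr : (P.card : ℝ) = ((k:ℝ) * k - k) / 2 := by
    have h1 : ((2 * P.card : ℕ) : ℝ) = ((k * k - k : ℕ) : ℝ) := by exact_mod_cast congrArg (Nat.cast (R := ℝ)) h2P
    rw [Nat.cast_sub hkk] at h1
    push_cast at h1
    linarith
  have hQr : (Q.card : ℝ) = (k:ℝ) * l - e := by
    have h1 : ((Q.card + e : ℕ) : ℝ) = ((k * l : ℕ) : ℝ) := by exact_mod_cast congrArg (Nat.cast (R := ℝ)) hQe
    push_cast at h1
    linarith
  have hlr : (l : ℝ) = 2 * n + 1 - k := by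
    have : ((k + l : ℕ) : ℝ) = ((2 * n + 1 : ℕ) : ℝ) := by exact_mod_cast congrArg (Nat.cast (R := ℝ)) hkl
    push_cast at this
    linarith
  have hminr : ((min k l : ℕ) : ℝ) ≤ (e : ℝ) := by exact_mod_cast hmine
  have hmincast : min (k:ℝ) (2 * n + 1 - k) = ((min k l : ℕ) : ℝ) := by
    rw [← hlr, Nat.cast_min]
  rw [sum_inDeg A S]
  rw [Tf]
  rw [hmincast]
  have hklr : (k:ℝ) * l = (k:ℝ) * (2 * n + 1 - k) := by rw [hlr]
  linarith [hQr, hPr, hminr, hklr]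

theorem cast_ineq {a b : ℕ} (h : a ≤ b) : (a : ℝ) ≤ (b : ℝ) := Nat.cast_le.2 h

theorem Tsum_eq (n : ℕ) (k : ℕ) (hk : k ≤ 2 * n + 1) :
    ∑ i ∈ Finset.univ.filter (fun i : Fin (2*n+1) => (i : ℕ) < k), imbInDegSeq n i = Tf n k := by
  induction k with
  | zero =>
    have : (Finset.univ.filter (fun i : Fin (2*n+1) => (i : ℕ) < 0)) = ∅ := by
      apply Finset.filter_false_of_mem; intro i _; omega
    rw [this, Finset.sum_empty, Tf]
    rw [min_eq_left (by
      push_cast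
      have : (0:ℝ) ≤ (n:ℝ) := Nat.cast_nonneg n
      linarith)]
    push_cast
    ring
  | succ k ih =>
    have hk2 : k ≤ 2 * n + 1 := by omega
    have hklt : k < 2 * n + 1 := by omega
    rw [filt_succ (2*n+1) k hklt, Finset.sum_insert (by simp), ih hk2]
    show imbInDegSeq n ⟨k, hklt⟩ + Tf n k = Tf n (k + 1)
    rw [imbInDegSeq, Tf, Tf]
    simp only []
    push_cast
    by_cases hA : k + 1 < n
    · rw [if_pos hA]
      rw [min_eq_left (by
        have := cast_ineq (show 2 * k ≤ 2 * n + 1 by omega); push_cast at this; linarith)]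
      rw [min_eq_left (by
        have := cast_ineq (show 2 * (k+1) ≤ 2 * n + 1 by omega); push_cast at this; linarith)]
      ring
    · rw [if_neg hA]
      by_cases hB : k < n
      · -- k + 1 = n
        rw [if_pos (show k < n + 2 by omega)]
        rw [min_eq_left (by
          have := cast_ineq (show 2 * k ≤ 2 * n + 1 by omega); push_cast at this; linarith)]
        rw [min_eq_left (by
          have := cast_ineq (show 2 * (k+1) ≤ 2 * n + 1 by omega); push_cast at this; linarith)]
        have hkn : (n : ℝ) = (k : ℝ) + 1 := by
          have : ((n : ℕ) : ℝ) = ((k + 1 : ℕ) : ℝ) := by exact_mod_cast congrArg (Nat.cast (R := ℝ)) (show n = k + 1 by omega)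
          push_cast at this; linarith
        rw [hkn]; ring
      · by_cases hC : k = n
        · rw [if_pos (show k < n + 2 by omega)]
          rw [min_eq_left (by
            have := cast_ineq (show 2 * k ≤ 2 * n + 1 by omega); push_cast at this; linarith)]
          rw [min_eq_right (by
            have := cast_ineq (show 2 * n + 1 ≤ 2 * (k + 1) by omega); push_cast at this; linarith)]
          have hkn : (n : ℝ) = (k : ℝ) := by exact_mod_cast congrArg (Nat.cast (R := ℝ)) hC.symm
          rw [hkn]; ring
        · -- k ≥ n + 1
          rw [min_eq_right (by
            have := cast_ineq (show 2 * n + 1 ≤ 2 * k by omega); push_cast at this; linarith)]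
          rw [min_eq_right (by
            have := cast_ineq (show 2 * n + 1 ≤ 2 * (k + 1) by omega); push_cast at this; linarith)]
          by_cases hD : k < n + 2
          · rw [if_pos hD]
            have hkn : (n : ℝ) = (k : ℝ) - 1 := by
              have : ((k : ℕ) : ℝ) = ((n + 1 : ℕ) : ℝ) := by exact_mod_cast congrArg (Nat.cast (R := ℝ)) (show k = n + 1 by omega)
              push_cast at this; linarith
            rw [hkn]; ring
          · rw [if_neg hD]
            ring

section Sorted
variable {m : ℕ} (x : Fin m → ℝ)

noncomputable def sortPerm : Fin m ≃ Fin m := Fin.revPerm.trans (Tuple.sort x)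

noncomputable def sortedDesc : Fin m → ℝ := x ∘ (sortPerm x)

theorem sortedDesc_antitone : Antitone (sortedDesc x) := by
  intro a b hab
  have hm := Tuple.monotone_sort x
  have : Fin.rev b ≤ Fin.rev a := Fin.rev_le_rev.2 hab
  exact hm this

theorem topSum_eq_sorted (k : ℕ) (hk : k ≤ m) :
    topSum x k = ∑ i ∈ Finset.univ.filter (fun i : Fin m => (i : ℕ) < k), sortedDesc x i := by
  classical
  set e := sortPerm x with he
  apply le_antisymm
  · obtain ⟨S, hS, heq⟩ := topSum_attained x k hk
    rw [heq]
    set T := S.image e.symm with hT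
    have hTcard : T.card = k := by
      rw [hT, Finset.card_image_of_injective _ e.symm.injective, hS]
    have hsum : ∑ i ∈ T, sortedDesc x i = ∑ i ∈ S, x i := by
      rw [hT, Finset.sum_image (fun a _ b _ h => e.symm.injective h)]
      apply Finset.sum_congr rfl
      intro i _
      show x (e (e.symm i)) = x i
      rw [Equiv.apply_symm_apply]
    rw [← hsum, ← hTcard]
    exact antitone_topk (sortedDesc x) (sortedDesc_antitone x) T
  · set T0 := (Finset.univ.filter (fun i : Fin m => (i : ℕ) < k)).image e with hT0
    have hT0card : T0.card = k := by
      rw [hT0, Finset.card_image_of_injective _ e.injective, filt_card m k hk]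
    have hsum : ∑ i ∈ T0, x i = ∑ i ∈ Finset.univ.filter (fun i : Fin m => (i : ℕ) < k), sortedDesc x i := by
      rw [hT0, Finset.sum_image (fun a _ b _ h => e.injective h)]
      rfl
    rw [← hsum]
    exact le_topSum x k T0 hT0card

theorem multiset_eq_sorted : Finset.univ.val.map x = Finset.univ.val.map (sortedDesc x) := by
  classical
  have h1 : Multiset.map (⇑(sortPerm x)) Finset.univ.val = Finset.univ.val := by
    have := Finset.map_univ_equiv (sortPerm x)
    calc Multiset.map (⇑(sortPerm x)) Finset.univ.val
        = (Finset.map (sortPerm x).toEmbedding Finset.univ).val := rfl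
      _ = Finset.univ.val := by rw [this]
  calc Finset.univ.val.map x = (Multiset.map (⇑(sortPerm x)) Finset.univ.val).map x := by rw [h1]
    _ = Finset.univ.val.map (sortedDesc x) := by rw [Multiset.map_map]; rfl

end Sorted

theorem filt_all (m : ℕ) : (Finset.univ.filter fun i : Fin m => (i : ℕ) < m) = Finset.univ := by
  apply Finset.filter_true_of_mem
  intro i _
  exact i.isLt

theorem Tf_total (n : ℕ) : Tf n (2 * n + 1) = (n : ℝ) * (2 * n + 1) := by
  rw [Tf]
  push_cast
  rw [min_eq_right (by
    have : (0:ℝ) ≤ (n:ℝ) := Nat.cast_nonneg n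
    linarith)]
  ring

theorem sum_imb (n : ℕ) : ∑ i, imbInDegSeq n i = (n : ℝ) * (2 * n + 1) := by
  have := Tsum_eq n (2 * n + 1) le_rfl
  rw [filt_all (2 * n + 1)] at this
  rw [this, Tf_total]

theorem sum_inDeg_univ {m : ℕ} (A : Matrix (Fin m) (Fin m) ℝ) (hA : IsTournament A) :
    2 * ∑ i, inDeg A i = (m : ℝ) * m - m := by
  classical
  have h := sum_inDeg A (Finset.univ : Finset (Fin m))
  have h2 : ((Finset.univ : Finset (Fin m))ᶜ : Finset (Fin m)) = ∅ := Finset.compl_univ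
  rw [h2] at h
  simp only [Finset.product_empty, Finset.filter_empty, Finset.card_empty] at h
  have h3 := within_card A hA (Finset.univ : Finset (Fin m))
  rw [Finset.card_univ, Fintype.card_fin] at h3
  have hmm : m ≤ m * m := by
    rcases Nat.eq_zero_or_pos m with hz | hp
    · simp [hz]
    · calc m = m * 1 := by ring
        _ ≤ m * m := Nat.mul_le_mul_left m hp
  have h4 : ((2 * (((Finset.univ ×ˢ Finset.univ).filter
      fun q : Fin m × Fin m => A q.1 q.2 = -1).card) : ℕ) : ℝ) = ((m * m - m : ℕ) : ℝ) := by
    exact_mod_cast congrArg (Nat.cast (R := ℝ)) h3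
  rw [Nat.cast_sub hmm] at h4
  push_cast at h4 h
  rw [h]
  linarith


/-- The in-degree multiset `D` of the imbalanced `(2n+1)`-RPS majorizes the in-degree
sequence of every playable `(2n+1)`-tournament `A`: the total sums agree (both equal
`n(2n+1)`) and every top-`k` partial sum of `D` dominates that of the in-degrees of
`A`; moreover if the in-degree multiset of `A` differs from `D` then some top-`k`
inequality is strict. -/
theorem imbalanced_RPS_maximizes_in_degree_majorization (n : ℕ) (hn : 1 ≤ n)
    (A : Matrix (Fin (2 * n + 1)) (Fin (2 * n + 1)) ℝ)
    (hA : IsTournament A) (hplay : Playable A) :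
    ((∑ i, imbInDegSeq n i) = (n : ℝ) * (2 * n + 1) ∧
      (∑ i, inDeg A i) = (n : ℝ) * (2 * n + 1)) ∧
    (∀ k : ℕ, 1 ≤ k → k ≤ 2 * n + 1 →
      topSum (inDeg A) k
        ≤ ∑ i ∈ Finset.univ.filter (fun i : Fin (2 * n + 1) => (i : ℕ) < k),
            imbInDegSeq n i) ∧
    (Finset.univ.val.map (inDeg A) ≠ Finset.univ.val.map (imbInDegSeq n) →
      ∃ k : ℕ, 1 ≤ k ∧ k ≤ 2 * n + 1 ∧
        topSum (inDeg A) k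
          < ∑ i ∈ Finset.univ.filter (fun i : Fin (2 * n + 1) => (i : ℕ) < k),
              imbInDegSeq n i) := by
  
  classical
  obtain ⟨v, -, hAv, hv0⟩ := hplay
  -- part 2 (needed also for part 3)
  have part2 : ∀ k : ℕ, k ≤ 2 * n + 1 → topSum (inDeg A) k
      ≤ ∑ i ∈ Finset.univ.filter (fun i : Fin (2*n+1) => (i : ℕ) < k), imbInDegSeq n i := by
    intro k hk
    rw [Tsum_eq n k hk]
    apply topSum_le (inDeg A) k hk
    intro S hS
    have := subset_bound A hA v hv0 hAv S
    rw [hS] at this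
    exact this
  refine ⟨⟨sum_imb n, ?_⟩, fun k hk1 hk2 => part2 k hk2, ?_⟩
  · have h1 := sum_inDeg_univ A hA
    have h2 : ((2*n+1 : ℕ) : ℝ) * ((2*n+1 : ℕ) : ℝ) - ((2*n+1 : ℕ) : ℝ) = 2 * ((n:ℝ) * (2*n+1)) := by
      push_cast; ring
    rw [h2] at h1
    linarith
  · intro hne
    by_contra hcon
    push_neg at hcon
    have heq : ∀ k : ℕ, k ≤ 2*n+1 → topSum (inDeg A) k
        = ∑ i ∈ Finset.univ.filter (fun i : Fin (2*n+1) => (i : ℕ) < k), imbInDegSeq n i := by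
      intro k hk
      rcases Nat.eq_zero_or_pos k with h0 | h0
      · subst h0
        have hf : (Finset.univ.filter (fun i : Fin (2*n+1) => (i : ℕ) < 0)) = ∅ := by
          apply Finset.filter_false_of_mem; intro i _; omega
        obtain ⟨S, hS, hSeq⟩ := topSum_attained (inDeg A) 0 (Nat.zero_le (2*n+1))
        rw [Finset.card_eq_zero] at hS
        rw [hSeq, hS, hf, Finset.sum_empty, Finset.sum_empty]
      · exact le_antisymm (part2 k hk) (hcon k h0 hk)
    have hy : ∀ i : Fin (2*n+1), sortedDesc (inDeg A) i = imbInDegSeq n i := by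
      intro i
      have hklt : (i : ℕ) < 2*n+1 := i.isLt
      have e1 := heq (i : ℕ) (by omega)
      have e2 := heq ((i : ℕ) + 1) (by omega)
      rw [topSum_eq_sorted _ _ (by omega : (i:ℕ) ≤ 2*n+1)] at e1
      rw [topSum_eq_sorted _ _ (by omega : (i:ℕ) + 1 ≤ 2*n+1)] at e2
      rw [filt_succ (2*n+1) (i : ℕ) hklt, Finset.sum_insert (by simp),
        Finset.sum_insert (by simp)] at e2
      have hieta : (⟨(i : ℕ), hklt⟩ : Fin (2*n+1)) = i := by ext; rfl
      rw [hieta] at e2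
      linarith
    apply hne
    rw [multiset_eq_sorted (inDeg A)]
    congr 1
    funext i
    exact hy i
end

section
/- Let m ≥ 3 be odd and let A be a tournament payoff matrix of size m. Then every probability vector v with A.mulVec v = 0 satisfies v i ≤ 1/3 for every index i. (In the Nash equilibrium of a playable RPS, no object is played with probability exceeding 1/3.) -/
open Matrix

/-- In a symmetric Nash equilibrium of an odd tournament game with at least three
objects, no object is played with probability exceeding `1/3`. -/
theorem nash_prob_le_third (m : ℕ) (hm : Odd m) (hm3 : 3 ≤ m)
    (A : Matrix (Fin m) (Fin m) ℝ) (hA : IsTournament A)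
    (v : Fin m → ℝ) (hv : IsProbVec v) (hker : A.mulVec v = 0) :
    ∀ i, v i ≤ 1 / 3 := by
  classical
  obtain ⟨hv0, hv1⟩ := hv
  obtain ⟨hdiag, hoff⟩ := hA
  intro i
  have hskew : ∀ j k : Fin m, A k j = -A j k := by
    intro j k
    by_cases h : j = k
    · subst h; rw [hdiag]; ring
    · exact (hoff j k h).2
  have hrow : ∀ j, ∑ k, A j k * v k = 0 := by
    intro j
    have := congrFun hker j
    simpa [Matrix.mulVec, dotProduct] using this
  set N : Finset (Fin m) := Finset.univ.filter (fun j => A i j = -1) with hN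
  set P : Finset (Fin m) := Finset.univ.filter (fun j => A i j = 1) with hP
  have hiN : i ∉ N := by simp [hN, hdiag i]
  have hiP : i ∉ P := by simp [hP, hdiag i]
  have hNP : Disjoint N P := by
    rw [Finset.disjoint_left]
    intro a haN haP
    simp only [hN, hP, Finset.mem_filter, Finset.mem_univ, true_and] at haN haP
    linarith
  have hiNP : i ∉ N ∪ P := by simp [hiN, hiP]
  have huniv : (Finset.univ : Finset (Fin m)) = insert i (N ∪ P) := by
    ext j
    simp only [Finset.mem_insert, Finset.mem_union, hN, hP, Finset.mem_filter,
      Finset.mem_univ, true_and, true_iff]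
    by_cases h : j = i
    · left; exact h
    · right
      rcases (hoff i j (Ne.symm h)).1 with h1 | h1
      · right; exact h1
      · left; exact h1
  have hsplit : ∀ f : Fin m → ℝ, ∑ k, f k = f i + (∑ k ∈ N, f k + ∑ k ∈ P, f k) := by
    intro f
    rw [huniv, Finset.sum_insert hiNP, Finset.sum_union hNP]
  set s := ∑ j ∈ N, v j with hs
  set sP := ∑ j ∈ P, v j with hsP
  have hNval : ∀ j ∈ N, A i j = -1 := by
    intro j hj
    simpa [hN] using hj
  have hPval : ∀ j ∈ P, A i j = 1 := by
    intro j hj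
    simpa [hP] using hj
  have hrowi : sP = s := by
    have h0 := hrow i
    rw [hsplit (fun k => A i k * v k)] at h0
    have h1 : ∑ k ∈ N, A i k * v k = -s := by
      rw [hs, ← Finset.sum_neg_distrib]
      exact Finset.sum_congr rfl fun k hk => by rw [hNval k hk]; ring
    have h2 : ∑ k ∈ P, A i k * v k = sP := by
      rw [hsP]
      exact Finset.sum_congr rfl fun k hk => by rw [hPval k hk]; ring
    rw [hdiag i, h1, h2] at h0
    linarith
  have hsum1 : v i + s + sP = 1 := by
    have := hsplit v
    rw [hv1] at this
    linarith
  have hs0 : 0 ≤ s := Finset.sum_nonneg fun j _ => hv0 j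
  rcases eq_or_lt_of_le hs0 with hseq | hspos
  · -- s = 0 : then v i = 1 and everything else is 0; contradiction with another row
    exfalso
    have hvi1 : v i = 1 := by rw [← hrowi] at hsum1; linarith
    have hz : ∀ k, k ≠ i → v k = 0 := by
      intro k hk
      have hkNP : k ∈ N ∪ P := by
        have : k ∈ (Finset.univ : Finset (Fin m)) := Finset.mem_univ k
        rw [huniv] at this
        rcases Finset.mem_insert.mp this with h | h
        · exact absurd h hk
        · exact h
      rcases Finset.mem_union.mp hkNP with h | h
      · have hzero : ∑ j ∈ N, v j = 0 := hseq.symm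
        exact (Finset.sum_eq_zero_iff_of_nonneg fun j _ => hv0 j).mp hzero k h
      · have hzero : ∑ j ∈ P, v j = 0 := by rw [← hsP, hrowi, ← hseq]
        exact (Finset.sum_eq_zero_iff_of_nonneg fun j _ => hv0 j).mp hzero k h
    haveI : Nontrivial (Fin m) := Fin.nontrivial_iff_two_le.mpr (by omega)
    obtain ⟨j, hj⟩ := exists_ne i
    have h0 := hrow j
    have hone : ∑ k, A j k * v k = A j i := by
      rw [Fintype.sum_eq_single i]
      · rw [hvi1]; ring
      · intro k hk; rw [hz k hk]; ring
    rw [hone] at h0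
    rcases (hoff j i hj).1 with h1 | h1 <;> rw [h1] at h0 <;> norm_num at h0
  · -- s > 0
    have key : 0 = v i * s + (∑ j ∈ N, ∑ k ∈ P, v j * (A j k * v k)) := by
      have h0 : (0:ℝ) = ∑ j ∈ N, v j * (∑ k, A j k * v k) := by
        symm
        exact Finset.sum_eq_zero fun j _ => by rw [hrow j]; ring
      have hexp : ∀ j ∈ N, v j * (∑ k, A j k * v k)
          = v j * v i + (∑ k ∈ N, v j * (A j k * v k) + ∑ k ∈ P, v j * (A j k * v k)) := by
        intro j hj
        rw [hsplit (fun k => A j k * v k)]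
        have hAji : A j i = 1 := by rw [hskew, hNval j hj]; ring
        rw [hAji, mul_add, mul_add, Finset.mul_sum, Finset.mul_sum]
        ring
      rw [Finset.sum_congr rfl hexp, Finset.sum_add_distrib, Finset.sum_add_distrib] at h0
      have hQ : (∑ j ∈ N, ∑ k ∈ N, v j * (A j k * v k)) = 0 := by
        have h2 : (∑ j ∈ N, ∑ k ∈ N, v j * (A j k * v k))
            + (∑ j ∈ N, ∑ k ∈ N, v j * (A j k * v k)) = 0 := by
          nth_rewrite 2 [Finset.sum_comm]
          rw [← Finset.sum_add_distrib]
          refine Finset.sum_eq_zero fun j _ => ?_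
          rw [← Finset.sum_add_distrib]
          refine Finset.sum_eq_zero fun k _ => ?_
          rw [hskew j k]
          ring
        linarith
      have hvis : ∑ j ∈ N, v j * v i = v i * s := by
        rw [hs, Finset.mul_sum]
        exact Finset.sum_congr rfl fun j _ => mul_comm _ _
      rw [hQ, hvis] at h0
      linarith
    have hT : -(s * sP) ≤ ∑ j ∈ N, ∑ k ∈ P, v j * (A j k * v k) := by
      have hprod : s * sP = ∑ j ∈ N, ∑ k ∈ P, v j * v k := by
        rw [hs, hsP, Finset.sum_mul_sum]
      rw [hprod, ← Finset.sum_neg_distrib]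
      refine Finset.sum_le_sum fun j hj => ?_
      rw [← Finset.sum_neg_distrib]
      refine Finset.sum_le_sum fun k hk => ?_
      have hjk : j ≠ k := fun h => (Finset.disjoint_left.mp hNP hj) (h ▸ hk)
      rcases (hoff j k hjk).1 with h1 | h1 <;> rw [h1] <;> nlinarith [hv0 j, hv0 k]
    have hvile : v i ≤ s := by
      rw [hrowi] at hT
      nlinarith
    rw [hrowi] at hsum1
    linarith
end

section
/- Let n ≥ 1 and let A be a playable tournament payoff matrix of size 2n+1. For each vertex i let σ(i) = d⁺(i) - d⁻(i) be its score, and for each integer t let P(t) = (number of vertices i with σ(i) = t)/(2n+1). Then the entropy of the score distribution satisfies H = -∑_{t : P(t) > 0} P(t) · log(P(t)) ≤ log(2n+1) - (3/(2n+1)) · log 3, with equality for the imbalanced (2n+1)-RPS. (The imbalanced (2n+1)-RPS maximizes the uniform imbalance of entropy UI_e among playable games.) -/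
open Matrix

/-- The score `σ(i) = d⁺(i) - d⁻(i)` of a vertex: out-degree minus in-degree. -/
noncomputable def score {ι : Type*} [Fintype ι] (A : Matrix ι ι ℝ) (i : ι) : ℤ :=
  ((Finset.univ.filter fun j => A i j = 1).card : ℤ)
    - ((Finset.univ.filter fun j => A i j = -1).card : ℤ)

/-- `P(t)`: the proportion of vertices with score `t`. -/
noncomputable def scoreProb {ι : Type*} [Fintype ι] (A : Matrix ι ι ℝ) (t : ℤ) : ℝ :=
  ((Finset.univ.filter fun i => score A i = t).card : ℝ) / (Fintype.card ι : ℝ)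

/-- The entropy `H = -∑_{t : P(t) > 0} P(t) log P(t)` of the score distribution
(`log` is the natural logarithm; the sum ranges over the scores actually attained,
i.e. exactly the `t` with `P(t) > 0`). -/
noncomputable def scoreEntropy {ι : Type*} [Fintype ι] (A : Matrix ι ι ℝ) : ℝ :=
  -∑ t ∈ Finset.univ.image (score A), scoreProb A t * Real.log (scoreProb A t)

section Aux
open Finset

variable {ι : Type*} [Fintype ι]

def Tourn (A : Matrix ι ι ℝ) : Prop :=
  (∀ i, A i i = 0) ∧ ∀ i j : ι, i ≠ j → (A i j = 1 ∨ A i j = -1) ∧ A j i = -A i j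

noncomputable def tdeg (A : Matrix ι ι ℝ) (i : ι) : ℕ :=
  (Finset.univ.filter fun j => A i j = 1).card

noncomputable def tmult (A : Matrix ι ι ℝ) (d : ℕ) : ℕ :=
  (Finset.univ.filter fun i => tdeg A i = d).card

def Uncov (A : Matrix ι ι ℝ) : Prop :=
  ∀ i j : ι, A j i = 1 → (∀ k, A i k = 1 → A j k = 1) → False

variable {A : Matrix ι ι ℝ}

lemma Tourn.not_one_self (hT : Tourn A) (i : ι) : A i i ≠ 1 := by
  rw [hT.1 i]; norm_num

lemma Tourn.beats_or (hT : Tourn A) {i j : ι} (h : i ≠ j) : A i j = 1 ∨ A j i = 1 := by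
  rcases (hT.2 i j h).1 with h1 | h1
  · exact Or.inl h1
  · right; rw [(hT.2 i j h).2, h1]; norm_num

lemma Tourn.not_both (hT : Tourn A) {i j : ι} (h1 : A i j = 1) (h2 : A j i = 1) : False := by
  rcases eq_or_ne i j with rfl | hne
  · exact hT.not_one_self i h1
  · rw [(hT.2 i j hne).2, h1] at h2; norm_num at h2

lemma Tourn.neg_one_iff (hT : Tourn A) {i j : ι} (h : i ≠ j) : A i j = -1 ↔ A j i = 1 := by
  constructor
  · intro h1; rw [(hT.2 i j h).2, h1]; norm_num
  · intro h1
    rcases (hT.2 i j h).1 with h2 | h2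
    · exact absurd (hT.not_both h2 h1) (by simp)
    · exact h2

lemma Tourn.filter_neg_one (hT : Tourn A) (i : ι) :
    (Finset.univ.filter fun j => A i j = -1) = (Finset.univ.filter fun j => A j i = 1) := by
  apply Finset.filter_congr
  intro j _
  rcases eq_or_ne i j with rfl | hne
  · rw [hT.1]; norm_num
  · exact iff_of_eq (propext (hT.neg_one_iff hne))

lemma Tourn.deg_add (hT : Tourn A) (i : ι) :
    tdeg A i + (Finset.univ.filter fun j => A i j = -1).card + 1 = Fintype.card ι := by
  classical
  have hdisj : Disjoint (Finset.univ.filter fun j => A i j = 1)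
      (Finset.univ.filter fun j => A i j = -1) := by
    rw [Finset.disjoint_filter]
    intro j _ h1 h2
    rw [h1] at h2; norm_num at h2
  have hunion : (Finset.univ.filter fun j => A i j = 1) ∪
      (Finset.univ.filter fun j => A i j = -1) = Finset.univ.erase i := by
    ext j
    simp only [Finset.mem_union, Finset.mem_filter, Finset.mem_univ, true_and,
      Finset.mem_erase, and_true]
    constructor
    · rintro (h | h) rfl
      · exact hT.not_one_self j h
      · rw [hT.1 j] at h; norm_num at h
    · intro h; exact (hT.2 i j (Ne.symm h)).1
  have := Finset.card_union_of_disjoint hdisj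
  rw [hunion, Finset.card_erase_of_mem (Finset.mem_univ i), Finset.card_univ] at this
  have hc : 1 ≤ Fintype.card ι := Fintype.card_pos_iff.mpr ⟨i⟩
  unfold tdeg
  omega

lemma Tourn.score_eq (hT : Tourn A) (i : ι) :
    score A i + (Fintype.card ι : ℤ) = 2 * (tdeg A i : ℤ) + 1 := by
  have := hT.deg_add i
  unfold score tdeg at *
  push_cast
  omega

lemma Tourn.sum_tdeg (hT : Tourn A) :
    2 * ∑ i, tdeg A i = Fintype.card ι * (Fintype.card ι - 1) := by
  classical
  have h1 : ∀ i, (Finset.univ.filter fun j => A i j = -1).card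
      = ∑ j, if A j i = 1 then 1 else 0 := by
    intro i
    rw [hT.filter_neg_one i, Finset.card_filter]
  have h2 : ∑ i, (Finset.univ.filter fun j => A i j = -1).card = ∑ i, tdeg A i := by
    simp only [h1]
    rw [Finset.sum_comm]
    apply Finset.sum_congr rfl
    intro i _
    rw [tdeg, Finset.card_filter]
  have h3 : ∑ i, (tdeg A i + (Finset.univ.filter fun j => A i j = -1).card + 1)
      = Fintype.card ι * Fintype.card ι := by
    simp only [hT.deg_add]
    rw [Finset.sum_const, Finset.card_univ, smul_eq_mul]
  rw [Finset.sum_add_distrib, Finset.sum_add_distrib, h2, Finset.sum_const,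
    Finset.card_univ, smul_eq_mul, mul_one] at h3
  rcases Nat.eq_zero_or_pos (Fintype.card ι) with hc | hc
  · rw [hc] at h3 ⊢; omega
  · have h4 : Fintype.card ι * (Fintype.card ι - 1) + Fintype.card ι
        = Fintype.card ι * Fintype.card ι := by
      rw [← Nat.mul_succ]; congr 1; omega
    omega

end Aux

section Aux2
open Finset

variable {ι : Type*} [Fintype ι] {A : Matrix ι ι ℝ} {v : ι → ℝ}

lemma uncov_of_eq (hT : Tourn A) (hpos : ∀ i, 0 < v i) (heq : A.mulVec v = 0) :
    Uncov A := by
  classical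
  intro i j hji hcov
  have hij : i ≠ j := by
    rintro rfl; exact hT.not_one_self i hji
  set f : ι → ℝ := fun k => (A j k - A i k) * v k with hf
  have hnonneg : ∀ k, 0 ≤ f k := by
    intro k
    rcases eq_or_ne k i with rfl | hki
    · rw [hf]; simp only [hT.1 k, sub_zero, hji]
      nlinarith [hpos k]
    rcases eq_or_ne k j with rfl | hkj
    · have hik : A i k = -1 := (hT.neg_one_iff hij).mpr hji
      rw [hf]; simp only [hT.1 k, hik]
      nlinarith [hpos k]
    · rcases (hT.2 i k (fun h => hki h.symm)).1 with h1 | h1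
      · rw [hf]; simp only [hcov k h1, h1, sub_self, zero_mul, le_refl]
      · rcases (hT.2 j k (fun h => hkj h.symm)).1 with h2 | h2 <;>
          · rw [hf]; simp only [h1, h2]; nlinarith [hpos k]
  have hi0 : A.mulVec v i = 0 := by rw [heq]; rfl
  have hj0 : A.mulVec v j = 0 := by rw [heq]; rfl
  rw [Matrix.mulVec, dotProduct] at hi0 hj0
  have hsum : ∑ k, f k = 0 := by
    rw [hf]
    simp only [sub_mul]
    rw [Finset.sum_sub_distrib, hi0, hj0, sub_zero]
  have hzero : f i = 0 := by
    have := (Finset.sum_eq_zero_iff_of_nonneg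
      (fun k (_ : k ∈ Finset.univ) => hnonneg k)).mp hsum i (Finset.mem_univ i)
    exact this
  rw [hf] at hzero
  simp only [hT.1 i, sub_zero, hji, one_mul] at hzero
  exact absurd hzero (ne_of_gt (hpos i))

lemma tdeg_bounds (hT : Tourn A) (hpos : ∀ i, 0 < v i) (heq : A.mulVec v = 0)
    (hcard : 3 ≤ Fintype.card ι) (i : ι) :
    1 ≤ tdeg A i ∧ tdeg A i + 2 ≤ Fintype.card ι := by
  classical
  have hi0 : A.mulVec v i = 0 := by rw [heq]; rfl
  rw [Matrix.mulVec, dotProduct] at hi0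
  have hsplit : ∑ j, A i j * v j = ∑ j ∈ Finset.univ.erase i, A i j * v j := by
    rw [← Finset.sum_erase_add _ _ (Finset.mem_univ i), hT.1 i, zero_mul, add_zero]
  have hne : (Finset.univ.erase i).Nonempty := by
    rw [← Finset.card_pos, Finset.card_erase_of_mem (Finset.mem_univ i), Finset.card_univ]
    omega
  constructor
  · by_contra h
    have h0 : tdeg A i = 0 := by omega
    have hall : ∀ j, j ≠ i → A i j = -1 := by
      intro j hj
      rcases (hT.2 i j (Ne.symm hj)).1 with h1 | h1
      · exfalso
        have hmem : j ∈ Finset.univ.filter fun j => A i j = 1 := by simp [h1]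
        rw [tdeg, Finset.card_eq_zero] at h0
        rw [h0] at hmem
        exact absurd hmem (Finset.notMem_empty j)
      · exact h1
    have hneg : ∑ j ∈ Finset.univ.erase i, A i j * v j < 0 := by
      apply Finset.sum_neg _ hne
      intro j hj
      rw [hall j (Finset.ne_of_mem_erase hj)]
      nlinarith [hpos j]
    rw [hsplit] at hi0
    linarith
  · by_contra h
    have hsub : (Finset.univ.filter fun j => A i j = 1) ⊆ Finset.univ.erase i := by
      intro j hj
      simp only [Finset.mem_filter] at hj
      apply Finset.mem_erase.mpr
      refine ⟨?_, Finset.mem_univ j⟩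
      rintro rfl
      exact hT.not_one_self j hj.2
    have hEq : (Finset.univ.filter fun j => A i j = 1) = Finset.univ.erase i := by
      apply Finset.eq_of_subset_of_card_le hsub
      rw [Finset.card_erase_of_mem (Finset.mem_univ i), Finset.card_univ]
      unfold tdeg at h
      omega
    have hall : ∀ j, j ≠ i → A i j = 1 := by
      intro j hj
      have : j ∈ Finset.univ.filter fun j => A i j = 1 :=
        hEq ▸ (Finset.mem_erase.mpr ⟨hj, Finset.mem_univ j⟩)
      exact (Finset.mem_filter.mp this).2
    have hposs : 0 < ∑ j ∈ Finset.univ.erase i, A i j * v j := by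
      apply Finset.sum_pos _ hne
      intro j hj
      rw [hall j (Finset.ne_of_mem_erase hj)]
      nlinarith [hpos j]
    rw [hsplit] at hi0
    linarith

lemma victim (hT : Tourn A) (hU : Uncov A) {u : ι} (hu : tdeg A u = 1) :
    ∃ t, A u t = 1 ∧ (∀ y, A u y = 1 → y = t) ∧ ∀ w, w ≠ u → w ≠ t → A t w = 1 := by
  classical
  rw [tdeg, Finset.card_eq_one] at hu
  obtain ⟨t, ht⟩ := hu
  have h1 : A u t = 1 := by
    have : t ∈ Finset.univ.filter fun j => A u j = 1 := ht ▸ Finset.mem_singleton_self t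
    exact (Finset.mem_filter.mp this).2
  have h2 : ∀ y, A u y = 1 → y = t := by
    intro y hy
    have : y ∈ Finset.univ.filter fun j => A u j = 1 := by simp [hy]
    rw [ht] at this
    exact Finset.mem_singleton.mp this
  refine ⟨t, h1, h2, ?_⟩
  intro w hwu hwt
  have htw : t ≠ w := fun h => hwt h.symm
  by_contra hcon
  have hwt1 : A w t = 1 := by
    rcases (hT.2 t w htw).1 with h3 | h3
    · exact absurd h3 hcon
    · exact (hT.neg_one_iff htw).mp h3
  have hwu1 : A w u = 1 := by
    rcases (hT.2 u w (Ne.symm hwu)).1 with h4 | h4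
    · exact absurd (h2 w h4) hwt
    · exact (hT.neg_one_iff (Ne.symm hwu)).mp h4
  exact hU u w hwu1 (fun k hk => by rw [h2 k hk]; exact hwt1)

end Aux2

section Aux3
open Finset

lemma card_filter_subtype {ι : Type*} [Fintype ι] (p : ι → Prop) [DecidablePred p]
    (q : ι → Prop) [DecidablePred q] :
    (Finset.univ.filter fun x : {y : ι // p y} => q x.1).card
      = (Finset.univ.filter fun x : ι => p x ∧ q x).card := by
  apply Finset.card_bij (fun x _ => x.1)
  · intro x hx
    simp only [Finset.mem_filter, Finset.mem_univ, true_and] at hx ⊢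
    exact ⟨x.2, hx⟩
  · intro x _ y _ h; exact Subtype.ext h
  · intro y hy
    simp only [Finset.mem_filter, Finset.mem_univ, true_and] at hy
    exact ⟨⟨y, hy.1⟩, by simp [hy.2], rfl⟩

lemma sum_Icc_one (m : ℕ) : 2 * ∑ d ∈ Finset.Icc 1 m, d = m * (m + 1) := by
  induction m with
  | zero => simp
  | succ m ih =>
    rw [Finset.sum_Icc_succ_top (by omega : 1 ≤ m + 1)]
    ring_nf
    ring_nf at ih
    omega

lemma sum_tdeg_fiberwise {ι : Type*} [Fintype ι] (A : Matrix ι ι ℝ) (M : ℕ)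
    (hdeg : ∀ i, 1 ≤ tdeg A i ∧ tdeg A i + 2 ≤ 2 * M + 1) :
    ∑ i, tdeg A i = ∑ d ∈ Finset.Icc 1 (2 * M - 1), tmult A d * d := by
  classical
  rw [← Finset.sum_fiberwise_of_maps_to (g := tdeg A) (t := Finset.Icc 1 (2 * M - 1))
      (fun x _ => by simp only [Finset.mem_Icc]; have := hdeg x; omega)]
  apply Finset.sum_congr rfl
  intro d _
  rw [tmult]
  rw [Finset.sum_congr rfl (fun x hx => (Finset.mem_filter.mp hx).2), Finset.sum_const,
    smul_eq_mul]

end Aux3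

section Aux4
open Finset

lemma tdeg_lower {ι : Type*} [Fintype ι] [DecidableEq ι] {A : Matrix ι ι ℝ} {t u : ι}
    (htu : t ≠ u) (hall : ∀ w, w ≠ u → w ≠ t → A t w = 1) :
    Fintype.card ι ≤ tdeg A t + 2 := by
  have hsub : (Finset.univ.erase u).erase t ⊆ Finset.univ.filter fun j => A t j = 1 := by
    intro w hw
    simp only [Finset.mem_erase, Finset.mem_univ, and_true] at hw
    simp only [Finset.mem_filter, Finset.mem_univ, true_and]
    exact hall w hw.2 hw.1
  have hle := Finset.card_le_card hsub
  rw [Finset.card_erase_of_mem (Finset.mem_erase.mpr ⟨htu, Finset.mem_univ t⟩),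
    Finset.card_erase_of_mem (Finset.mem_univ u), Finset.card_univ] at hle
  unfold tdeg
  omega

lemma exclusion (N : ℕ) : ∀ (ι : Type) [Fintype ι] [DecidableEq ι] (A : Matrix ι ι ℝ),
    Tourn A → Uncov A → Fintype.card ι = 2 * N + 1 →
    (∀ i, 1 ≤ tdeg A i ∧ tdeg A i + 2 ≤ 2 * N + 1) →
    ∀ a b : ℕ, a ≠ b → 1 ≤ a → a + 2 ≤ 2 * N + 1 → 1 ≤ b → b + 2 ≤ 2 * N + 1 →
      tmult A a = 2 → tmult A b = 2 →
      (∀ d, 1 ≤ d → d + 2 ≤ 2 * N + 1 → d ≠ a → d ≠ b → tmult A d = 1) → False := by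
  induction N with
  | zero =>
    intro ι _ _ A hT hU hcard hdeg a b hab ha1 ha2 hb1 hb2 hma hmb hrest
    omega
  | succ N ih =>
    intro ι _ _ A hT hU hcard hdeg a b hab ha1 ha2 hb1 hb2 hma hmb hrest
    classical
    have hN1 : 1 ≤ N := by omega
    have hIcc : 2 * (N + 1) - 1 = 2 * N + 1 := by omega
    -- a + b = 2 * (N + 1)
    have hab2 : a + b = 2 * (N + 1) := by
      have hfib : ∑ i, tdeg A i = ∑ d ∈ Finset.Icc 1 (2 * N + 1), tmult A d * d := by
        rw [← hIcc]; exact sum_tdeg_fiberwise A (N + 1) hdeg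
      have hsum2 : 2 * ∑ i, tdeg A i = (2 * (N + 1) + 1) * (2 * (N + 1)) := by
        have h := hT.sum_tdeg
        rw [hcard] at h
        have h21 : 2 * (N + 1) + 1 - 1 = 2 * (N + 1) := by omega
        rw [h21] at h
        exact h
      have haI : a ∈ Finset.Icc 1 (2 * N + 1) := by simp only [Finset.mem_Icc]; omega
      have hbI : b ∈ (Finset.Icc 1 (2 * N + 1)).erase a :=
        Finset.mem_erase.mpr ⟨Ne.symm hab, by simp only [Finset.mem_Icc]; omega⟩
      have hsplit : ∀ f : ℕ → ℕ, ∑ d ∈ Finset.Icc 1 (2 * N + 1), f d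
          = ∑ d ∈ ((Finset.Icc 1 (2 * N + 1)).erase a).erase b, f d + f b + f a := by
        intro f
        rw [Finset.sum_erase_add _ _ hbI, Finset.sum_erase_add _ _ haI]
      have hone : ∀ d ∈ ((Finset.Icc 1 (2 * N + 1)).erase a).erase b, tmult A d * d = d := by
        intro d hd
        simp only [Finset.mem_erase, Finset.mem_Icc] at hd
        rw [hrest d (by omega) (by omega) hd.2.1 hd.1, one_mul]
      have hE1 := hsplit (fun d => tmult A d * d)
      rw [Finset.sum_congr rfl hone, hma, hmb] at hE1
      have hE2 := hsplit id
      have hgauss := sum_Icc_one (2 * N + 1)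
      have hprod1 : (2 * (N + 1) + 1) * (2 * (N + 1)) = 4 * (N * N) + 10 * N + 6 := by ring
      have hprod2 : (2 * N + 1) * (2 * N + 1 + 1) = 4 * (N * N) + 6 * N + 2 := by ring
      simp only [id] at hE2
      omega
    by_cases hone : a = 1 ∨ b = 1
    · -- base case: two vertices of degree 1
      have hm1 : tmult A 1 = 2 := by
        rcases hone with rfl | rfl
        · exact hma
        · exact hmb
      rw [tmult, Finset.card_eq_two] at hm1
      obtain ⟨u1, u2, hu12, hset⟩ := hm1
      have hu1 : tdeg A u1 = 1 := by
        have h : u1 ∈ Finset.univ.filter fun i => tdeg A i = 1 := by rw [hset]; simp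
        exact (Finset.mem_filter.mp h).2
      have hu2 : tdeg A u2 = 1 := by
        have h : u2 ∈ Finset.univ.filter fun i => tdeg A i = 1 := by rw [hset]; simp
        exact (Finset.mem_filter.mp h).2
      obtain ⟨t1, ht1, ht1u, ht1all⟩ := victim hT hU hu1
      obtain ⟨t2, ht2, ht2u, ht2all⟩ := victim hT hU hu2
      have ht1u1 : t1 ≠ u1 := by rintro rfl; exact hT.not_one_self t1 ht1
      have ht2u2 : t2 ≠ u2 := by rintro rfl; exact hT.not_one_self t2 ht2
      have hdt1 : tdeg A t1 = 2 * N + 1 := by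
        have h := tdeg_lower ht1u1 ht1all
        have h2 := (hdeg t1).2
        omega
      have hdt2 : tdeg A t2 = 2 * N + 1 := by
        have h := tdeg_lower ht2u2 ht2all
        have h2 := (hdeg t2).2
        omega
      have ht1u2 : t1 ≠ u2 := by rintro rfl; omega
      have ht2u1 : t2 ≠ u1 := by rintro rfl; omega
      have ht12 : t1 ≠ t2 := by
        rintro rfl
        exact hT.not_both (ht1all u2 (Ne.symm hu12) (fun h => ht1u2 h.symm)) ht2
      exact hT.not_both (ht1all t2 ht2u1 (Ne.symm ht12)) (ht2all t1 ht1u2 ht12)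
    · -- inductive step
      push_neg at hone
      obtain ⟨ha1', hb1'⟩ := hone
      have hm1 : tmult A 1 = 1 := hrest 1 le_rfl (by omega) (Ne.symm ha1') (Ne.symm hb1')
      have hmtop : tmult A (2 * N + 1) = 1 := hrest (2 * N + 1) (by omega) (by omega)
        (by omega) (by omega)
      rw [tmult, Finset.card_eq_one] at hm1 hmtop
      obtain ⟨u, hufib⟩ := hm1
      obtain ⟨tt, htfib⟩ := hmtop
      have hu : tdeg A u = 1 := by
        have h : u ∈ Finset.univ.filter fun i => tdeg A i = 1 := by
          rw [hufib]; exact Finset.mem_singleton_self u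
        exact (Finset.mem_filter.mp h).2
      have huniq1 : ∀ x, tdeg A x = 1 → x = u := by
        intro x hx
        have h : x ∈ Finset.univ.filter fun i => tdeg A i = 1 := by simp [hx]
        rw [hufib] at h
        exact Finset.mem_singleton.mp h
      obtain ⟨t, htv, htuniq, htall⟩ := victim hT hU hu
      have htu : t ≠ u := by rintro rfl; exact hT.not_one_self t htv
      have hdt : tdeg A t = 2 * N + 1 := by
        have h := tdeg_lower htu htall
        have h2 := (hdeg t).2
        omega
      have huniqT : ∀ x, tdeg A x = 2 * N + 1 → x = t := by
        intro x hx
        have hxf : x ∈ Finset.univ.filter fun i => tdeg A i = 2 * N + 1 := by simp [hx]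
        have htf : t ∈ Finset.univ.filter fun i => tdeg A i = 2 * N + 1 := by simp [hdt]
        rw [htfib] at hxf htf
        rw [Finset.mem_singleton.mp hxf, ← Finset.mem_singleton.mp htf]
      have hAxu : ∀ x, x ≠ u → x ≠ t → A x u = 1 := by
        intro x hxu hxt
        rcases (hT.2 u x (Ne.symm hxu)).1 with h | h
        · exact absurd (htuniq x h) hxt
        · exact (hT.neg_one_iff (Ne.symm hxu)).mp h
      have hAxt : ∀ x, x ≠ u → x ≠ t → A x t ≠ 1 := by
        intro x hxu hxt hcon
        exact hT.not_both (htall x hxu hxt) hcon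
      -- pass to the subtournament on the complement of {u, t}
      set ι' := {x : ι // x ≠ u ∧ x ≠ t} with hι'
      set A' : Matrix ι' ι' ℝ := Matrix.of fun i j => A i.1 j.1 with hA'
      have hT' : Tourn A' := by
        constructor
        · intro i; exact hT.1 i.1
        · intro i j hij
          exact hT.2 i.1 j.1 (fun h => hij (Subtype.ext h))
      have hU' : Uncov A' := by
        intro i j hji hcov
        apply hU i.1 j.1 hji
        intro k hk
        by_cases hku : k = u
        · rw [hku]; exact hAxu j.1 j.2.1 j.2.2
        by_cases hkt : k = t
        · rw [hkt] at hk; exact absurd hk (hAxt i.1 i.2.1 i.2.2)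
        · exact hcov ⟨k, hku, hkt⟩ hk
      have hcard' : Fintype.card ι' = 2 * N + 1 := by
        rw [Fintype.card_subtype]
        have he : Finset.univ.filter (fun x : ι => x ≠ u ∧ x ≠ t)
            = (Finset.univ.erase u).erase t := by
          ext x
          simp only [Finset.mem_filter, Finset.mem_erase, Finset.mem_univ, true_and, and_true]
          tauto
        rw [he, Finset.card_erase_of_mem (Finset.mem_erase.mpr ⟨htu, Finset.mem_univ t⟩),
          Finset.card_erase_of_mem (Finset.mem_univ u), Finset.card_univ, hcard]
        omega
      have htdeg' : ∀ x : ι', tdeg A' x + 1 = tdeg A x.1 := by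
        intro x
        have h1 : tdeg A' x
            = (Finset.univ.filter fun y : ι => (y ≠ u ∧ y ≠ t) ∧ A x.1 y = 1).card :=
          card_filter_subtype (fun y : ι => y ≠ u ∧ y ≠ t) (fun y : ι => A x.1 y = 1)
        have h2 : (Finset.univ.filter fun y : ι => (y ≠ u ∧ y ≠ t) ∧ A x.1 y = 1)
            = (Finset.univ.filter fun y : ι => A x.1 y = 1).erase u := by
          ext y
          simp only [Finset.mem_filter, Finset.mem_erase, Finset.mem_univ, true_and]
          constructor
          · rintro ⟨⟨hyu, hyt⟩, hy⟩; exact ⟨hyu, hy⟩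
          · rintro ⟨hyu, hy⟩
            refine ⟨⟨hyu, ?_⟩, hy⟩
            rintro rfl
            exact hAxt x.1 x.2.1 x.2.2 hy
        have hmemu : u ∈ Finset.univ.filter fun y : ι => A x.1 y = 1 := by
          simp only [Finset.mem_filter, Finset.mem_univ, true_and]
          exact hAxu x.1 x.2.1 x.2.2
        have h3 : 1 ≤ tdeg A x.1 := (hdeg x.1).1
        rw [h1, h2, Finset.card_erase_of_mem hmemu]
        unfold tdeg at h3 ⊢
        omega
      have hdeg' : ∀ x : ι', 1 ≤ tdeg A' x ∧ tdeg A' x + 2 ≤ 2 * N + 1 := by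
        intro x
        have h1 := htdeg' x
        have h2 := hdeg x.1
        have h3 : tdeg A x.1 ≠ 1 := fun h => x.2.1 (huniq1 x.1 h)
        have h4 : tdeg A x.1 ≠ 2 * N + 1 := fun h => x.2.2 (huniqT x.1 h)
        omega
      have htmult' : ∀ d, 1 ≤ d → d + 2 ≤ 2 * N + 1 → tmult A' d = tmult A (d + 1) := by
        intro d hd1 hd2
        have h0 : (Finset.univ.filter fun x : ι' => tdeg A' x = d)
            = Finset.univ.filter fun x : ι' => tdeg A x.1 - 1 = d := by
          apply Finset.filter_congr
          intro x _
          have := htdeg' x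
          constructor <;> (intro h; omega)
        have h1 : tmult A' d
            = (Finset.univ.filter fun y : ι => (y ≠ u ∧ y ≠ t) ∧ tdeg A y - 1 = d).card := by
          rw [tmult, h0]
          exact card_filter_subtype (fun y : ι => y ≠ u ∧ y ≠ t) (fun y : ι => tdeg A y - 1 = d)
        have h2 : (Finset.univ.filter fun y : ι => (y ≠ u ∧ y ≠ t) ∧ tdeg A y - 1 = d)
            = Finset.univ.filter fun y : ι => tdeg A y = d + 1 := by
          ext y
          simp only [Finset.mem_filter, Finset.mem_univ, true_and]
          constructor
          · rintro ⟨⟨hyu, hyt⟩, hy⟩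
            have := (hdeg y).1
            omega
          · intro hy
            have hyu : y ≠ u := by
              rintro rfl; rw [hu] at hy; omega
            have hyt : y ≠ t := by
              rintro rfl; rw [hdt] at hy; omega
            exact ⟨⟨hyu, hyt⟩, by omega⟩
        rw [h1, h2, tmult]
      exact ih ι' A' hT' hU' hcard' hdeg' (a - 1) (b - 1) (by omega) (by omega) (by omega)
        (by omega) (by omega)
        (by rw [htmult' (a - 1) (by omega) (by omega), show a - 1 + 1 = a by omega]; exact hma)
        (by rw [htmult' (b - 1) (by omega) (by omega), show b - 1 + 1 = b by omega]; exact hmb)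
        (fun d h1 h2 hda hdb => by
          rw [htmult' d h1 h2]
          exact hrest (d + 1) (by omega) (by omega) (by omega) (by omega))

end Aux4

section Aux5
open Finset

lemma sum_tmult_image {ι : Type*} [Fintype ι] (A : Matrix ι ι ℝ) :
    ∑ d ∈ Finset.univ.image (tdeg A), tmult A d = Fintype.card ι := by
  classical
  rw [← Finset.card_univ, Finset.card_eq_sum_card_image (tdeg A) Finset.univ]
  rfl

lemma entropy_eq {ι : Type*} [Fintype ι] (A : Matrix ι ι ℝ) (hT : Tourn A)
    (h0 : 0 < Fintype.card ι) :
    scoreEntropy A = Real.log (Fintype.card ι)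
      - (Fintype.card ι : ℝ)⁻¹ *
        ∑ d ∈ Finset.univ.image (tdeg A), (tmult A d : ℝ) * Real.log (tmult A d) := by
  classical
  set m := Fintype.card ι with hm
  have hm0 : (m : ℝ) ≠ 0 := Nat.cast_ne_zero.mpr (by omega)
  have hscore : ∀ i, score A i = 2 * (tdeg A i : ℤ) + 1 - m := by
    intro i; have := hT.score_eq i; omega
  have himg : Finset.univ.image (score A)
      = (Finset.univ.image (tdeg A)).image (fun d : ℕ => 2 * (d : ℤ) + 1 - m) := by
    rw [Finset.image_image]
    exact Finset.image_congr (fun i _ => hscore i)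
  have hprob : ∀ d : ℕ, scoreProb A (2 * (d : ℤ) + 1 - m) = (tmult A d : ℝ) / m := by
    intro d
    rw [scoreProb, tmult]
    have hfilter : (Finset.univ.filter fun i => score A i = 2 * (d : ℤ) + 1 - m)
        = Finset.univ.filter fun i => tdeg A i = d := by
      apply Finset.filter_congr
      intro i _
      have := hscore i
      constructor <;> (intro h; omega)
    rw [hfilter]
  have hinj : ∀ x ∈ Finset.univ.image (tdeg A), ∀ y ∈ Finset.univ.image (tdeg A),
      (fun d : ℕ => 2 * (d : ℤ) + 1 - m) x = (fun d : ℕ => 2 * (d : ℤ) + 1 - m) y → x = y := by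
    intro x _ y _ h
    simp only at h
    omega
  rw [scoreEntropy, himg, Finset.sum_image hinj]
  have step : ∑ d ∈ Finset.univ.image (tdeg A),
      scoreProb A (2 * (d : ℤ) + 1 - m) * Real.log (scoreProb A (2 * (d : ℤ) + 1 - m))
      = ∑ d ∈ Finset.univ.image (tdeg A),
        ((tmult A d : ℝ) * Real.log (tmult A d) / m - (tmult A d : ℝ) * Real.log m / m) := by
    apply Finset.sum_congr rfl
    intro d hd
    have hc1 : 1 ≤ tmult A d := by
      obtain ⟨i, _, rfl⟩ := Finset.mem_image.mp hd
      rw [tmult, Nat.succ_le_iff, Finset.card_pos]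
      exact ⟨i, by simp⟩
    have hc0 : (tmult A d : ℝ) ≠ 0 := Nat.cast_ne_zero.mpr (by omega)
    rw [hprob d, Real.log_div hc0 hm0]
    field_simp
  rw [step, Finset.sum_sub_distrib]
  have h1 : ∑ d ∈ Finset.univ.image (tdeg A), (tmult A d : ℝ) * Real.log (tmult A d) / m
      = (∑ d ∈ Finset.univ.image (tdeg A), (tmult A d : ℝ) * Real.log (tmult A d)) / m := by
    rw [Finset.sum_div]
  have h2 : ∑ d ∈ Finset.univ.image (tdeg A), (tmult A d : ℝ) * Real.log m / m
      = Real.log m := by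
    simp only [mul_div_assoc]
    rw [← Finset.sum_mul]
    have : ∑ d ∈ Finset.univ.image (tdeg A), (tmult A d : ℝ) = m := by
      rw [← Nat.cast_sum]
      exact_mod_cast congrArg (Nat.cast : ℕ → ℝ) (sum_tmult_image A)
    rw [this]
    field_simp
  rw [h1, h2]
  field_simp
  ring

lemma S_ge {ι : Type} [Fintype ι] [DecidableEq ι] (n : ℕ) (hn : 1 ≤ n) (A : Matrix ι ι ℝ)
    (hT : Tourn A) (hU : Uncov A) (hcard : Fintype.card ι = 2 * n + 1)
    (hdeg : ∀ i, 1 ≤ tdeg A i ∧ tdeg A i + 2 ≤ 2 * n + 1) :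
    3 * Real.log 3
      ≤ ∑ d ∈ Finset.univ.image (tdeg A), (tmult A d : ℝ) * Real.log (tmult A d) := by
  classical
  set D := Finset.univ.image (tdeg A) with hD
  have hmult1 : ∀ d ∈ D, 1 ≤ tmult A d := by
    intro d hd
    obtain ⟨i, _, rfl⟩ := Finset.mem_image.mp hd
    rw [tmult, Nat.succ_le_iff, Finset.card_pos]
    exact ⟨i, by simp⟩
  have hnonneg : ∀ d ∈ D, (0 : ℝ) ≤ (tmult A d : ℝ) * Real.log (tmult A d) := by
    intro d hd
    have h1 := hmult1 d hd
    have : (1 : ℝ) ≤ (tmult A d : ℝ) := by exact_mod_cast h1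
    exact mul_nonneg (by linarith) (Real.log_nonneg this)
  have hDsub : D ⊆ Finset.Icc 1 (2 * n - 1) := by
    intro d hd
    obtain ⟨i, _, rfl⟩ := Finset.mem_image.mp hd
    have := hdeg i
    simp only [Finset.mem_Icc]
    omega
  have hDcard : D.card ≤ 2 * n - 1 := by
    have := Finset.card_le_card hDsub
    rwa [Nat.card_Icc, show 2 * n - 1 + 1 - 1 = 2 * n - 1 by omega] at this
  by_cases hbig : ∃ d0 ∈ D, 3 ≤ tmult A d0
  · obtain ⟨d0, hd0, h3⟩ := hbig
    have h3' : (3 : ℝ) ≤ (tmult A d0 : ℝ) := by exact_mod_cast h3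
    have hterm : 3 * Real.log 3 ≤ (tmult A d0 : ℝ) * Real.log (tmult A d0) := by
      have hlog : Real.log 3 ≤ Real.log (tmult A d0) :=
        Real.log_le_log (by norm_num) h3'
      have hl3 : (0:ℝ) ≤ Real.log 3 := Real.log_nonneg (by norm_num)
      nlinarith
    exact le_trans hterm (Finset.single_le_sum hnonneg hd0)
  · push_neg at hbig
    have hle2 : ∀ d ∈ D, tmult A d ≤ 2 := fun d hd => by have := hbig d hd; omega
    set D2 := D.filter (fun d => tmult A d = 2) with hD2
    have hsumD : ∑ d ∈ D, tmult A d = 2 * n + 1 := by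
      rw [hD, sum_tmult_image A, hcard]
    have hsplit : ∑ d ∈ D, tmult A d
        = 2 * D2.card + (D.filter (fun d => ¬ tmult A d = 2)).card := by
      rw [← Finset.sum_filter_add_sum_filter_not D (fun d => tmult A d = 2)]
      congr 1
      · rw [Finset.sum_congr rfl (fun d hd => (Finset.mem_filter.mp hd).2),
          Finset.sum_const, smul_eq_mul, mul_comm]
      · rw [Finset.sum_congr rfl (fun d hd => ?_), Finset.sum_const, smul_eq_mul, mul_one]
        have hd' := Finset.mem_filter.mp hd
        have := hmult1 d hd'.1
        have := hle2 d hd'.1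
        omega
    have hDcards : D.card = D2.card + (D.filter (fun d => ¬ tmult A d = 2)).card := by
      rw [hD2, Finset.card_filter_add_card_filter_not]
    have hD2ge : 2 ≤ D2.card := by omega
    rcases Nat.lt_or_ge D2.card 3 with hlt | hge
    · -- exactly two doubled degrees: excluded by the exclusion lemma
      exfalso
      have hD2card : D2.card = 2 := by omega
      have hDeq : D = Finset.Icc 1 (2 * n - 1) := by
        apply Finset.eq_of_subset_of_card_le hDsub
        rw [Nat.card_Icc]
        omega
      obtain ⟨a, b, hab, habset⟩ := Finset.card_eq_two.mp hD2card
      have haD2 : a ∈ D2 := by rw [habset]; simp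
      have hbD2 : b ∈ D2 := by rw [habset]; simp
      have haD := (Finset.mem_filter.mp haD2).1
      have hbD := (Finset.mem_filter.mp hbD2).1
      have hma := (Finset.mem_filter.mp haD2).2
      have hmb := (Finset.mem_filter.mp hbD2).2
      have haI := Finset.mem_Icc.mp (hDsub haD)
      have hbI := Finset.mem_Icc.mp (hDsub hbD)
      refine exclusion n ι A hT hU hcard hdeg a b hab (by omega) (by omega) (by omega)
        (by omega) hma hmb ?_
      intro d hd1 hd2 hda hdb
      have hdD : d ∈ D := by
        rw [hDeq]; simp only [Finset.mem_Icc]; omega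
      have hdnot : d ∉ D2 := by
        rw [habset]; simp only [Finset.mem_insert, Finset.mem_singleton]
        push_neg
        exact ⟨hda, hdb⟩
      have : ¬ tmult A d = 2 := fun h => hdnot (Finset.mem_filter.mpr ⟨hdD, h⟩)
      have := hmult1 d hdD
      have := hle2 d hdD
      omega
    · -- at least three doubled degrees
      have hsub2 : ∑ d ∈ D2, (tmult A d : ℝ) * Real.log (tmult A d)
          ≤ ∑ d ∈ D, (tmult A d : ℝ) * Real.log (tmult A d) :=
        Finset.sum_le_sum_of_subset_of_nonneg (Finset.filter_subset _ _)
          (fun d hd _ => hnonneg d hd)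
      have hval : ∑ d ∈ D2, (tmult A d : ℝ) * Real.log (tmult A d)
          = D2.card * (2 * Real.log 2) := by
        have hterm : ∀ d ∈ D2, (tmult A d : ℝ) * Real.log (tmult A d) = 2 * Real.log 2 := by
          intro d hd
          rw [(Finset.mem_filter.mp hd).2]
          norm_num
        rw [Finset.sum_congr rfl hterm, Finset.sum_const, nsmul_eq_mul]
      have hcard3 : (3 : ℝ) ≤ (D2.card : ℝ) := by exact_mod_cast hge
      have hlog23 : 3 * Real.log 3 ≤ 3 * (2 * Real.log 2) := by
        have h27 : Real.log 27 ≤ Real.log 64 := Real.log_le_log (by norm_num) (by norm_num)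
        have e1 : Real.log 27 = 3 * Real.log 3 := by
          rw [show (27 : ℝ) = 3 ^ 3 by norm_num, Real.log_pow]
          norm_num
        have e2 : Real.log 64 = 6 * Real.log 2 := by
          rw [show (64 : ℝ) = 2 ^ 6 by norm_num, Real.log_pow]
          norm_num
        rw [e1, e2] at h27
        linarith
      have hlog2 : (0:ℝ) ≤ Real.log 2 := Real.log_nonneg (by norm_num)
      calc 3 * Real.log 3 ≤ 3 * (2 * Real.log 2) := hlog23
        _ ≤ (D2.card : ℝ) * (2 * Real.log 2) := by nlinarith
        _ = ∑ d ∈ D2, (tmult A d : ℝ) * Real.log (tmult A d) := hval.symm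
        _ ≤ _ := hsub2

end Aux5

section AuxImb
open Finset

lemma imb_irrefl {n : ℕ} (a : ImbVertex n) : ¬ ImbBeats a a := by
  rcases a with i | i | u <;> simp [ImbBeats]

lemma imb_total {n : ℕ} {a b : ImbVertex n} (hab : a ≠ b) :
    ImbBeats a b ↔ ¬ ImbBeats b a := by
  rcases a with i | i | u <;> rcases b with j | j | w
  · have hij : (i : ℕ) ≠ (j : ℕ) := fun h => hab (congrArg Sum.inl (Fin.ext h))
    show i < j ↔ ¬ (j < i)
    rw [Fin.lt_def, Fin.lt_def]
    omega
  · show i ≠ j ↔ ¬ (i = j)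
    exact Iff.rfl
  · show True ↔ ¬ False
    simp
  · show j = i ↔ ¬ (j ≠ i)
    simp
  · have hij : (i : ℕ) ≠ (j : ℕ) :=
      fun h => hab (congrArg (fun x => Sum.inr (Sum.inl x)) (Fin.ext h))
    show j < i ↔ ¬ (i < j)
    rw [Fin.lt_def, Fin.lt_def]
    omega
  · show False ↔ ¬ True
    simp
  · show False ↔ ¬ True
    simp
  · show True ↔ ¬ False
    simp
  · cases u; cases w; exact absurd rfl hab

section
open scoped Classical

lemma imbRPS_apply {n : ℕ} (a b : ImbVertex n) :
    ImbRPS n a b = if ImbBeats a b then (1:ℝ) else if ImbBeats b a then -1 else 0 := rfl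

lemma imbRPS_one_iff {n : ℕ} (a b : ImbVertex n) : ImbRPS n a b = 1 ↔ ImbBeats a b := by
  rw [imbRPS_apply]
  split_ifs with h1 h2
  · simp [h1]
  · constructor
    · intro h; norm_num at h
    · intro h; exact absurd h h1
  · constructor
    · intro h; norm_num at h
    · intro h; exact absurd h h1

lemma imb_tourn (n : ℕ) : Tourn (ImbRPS n) := by
  constructor
  · intro i
    rw [imbRPS_apply, if_neg (imb_irrefl i), if_neg (imb_irrefl i)]
  · intro a b hab
    rcases em (ImbBeats a b) with h | h
    · have hnb : ¬ ImbBeats b a := (imb_total hab).mp h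
      rw [imbRPS_apply, imbRPS_apply]
      simp only [if_pos h, if_neg hnb]
      norm_num
    · have hb : ImbBeats b a := by
        by_contra h2
        exact h ((imb_total hab).mpr h2)
      rw [imbRPS_apply, imbRPS_apply]
      simp only [if_neg h, if_pos hb]
      norm_num
end

lemma imb_tdeg (n : ℕ) (v : ImbVertex n) :
    tdeg (ImbRPS n) v
      = Sum.elim (fun i : Fin n => 2 * n - 1 - (i : ℕ))
          (Sum.elim (fun i : Fin n => (i : ℕ) + 1) (fun _ => n)) v := by
  rw [tdeg, Finset.card_filter, Fintype.sum_sum_type, Fintype.sum_sum_type]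
  rcases v with i | i | u
  · have h1 : (∑ j : Fin n, if ImbRPS n (Sum.inl i) (Sum.inl j) = 1 then (1:ℕ) else 0)
        = n - 1 - (i : ℕ) := by
      rw [← Finset.card_filter]
      have he : (Finset.univ.filter fun j : Fin n => ImbRPS n (Sum.inl i) (Sum.inl j) = 1)
          = Finset.Ioi i := by
        ext j
        simp only [Finset.mem_filter, Finset.mem_univ, true_and, Finset.mem_Ioi,
          imbRPS_one_iff]
        simp [ImbBeats]
      rw [he, Fin.card_Ioi]
    have h2 : (∑ j : Fin n, if ImbRPS n (Sum.inl i) (Sum.inr (Sum.inl j)) = 1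
        then (1:ℕ) else 0) = n - 1 := by
      rw [← Finset.card_filter]
      have he : (Finset.univ.filter fun j : Fin n =>
          ImbRPS n (Sum.inl i) (Sum.inr (Sum.inl j)) = 1) = Finset.univ.erase i := by
        ext j
        simp only [Finset.mem_filter, Finset.mem_univ, true_and, Finset.mem_erase,
          and_true, imbRPS_one_iff]
        have : ImbBeats (Sum.inl i) (Sum.inr (Sum.inl j)) ↔ i ≠ j := by simp [ImbBeats]
        rw [this]
        exact ne_comm
      rw [he, Finset.card_erase_of_mem (Finset.mem_univ i), Finset.card_univ,
        Fintype.card_fin]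
    have h3 : (∑ j : Unit, if ImbRPS n (Sum.inl i) (Sum.inr (Sum.inr j)) = 1
        then (1:ℕ) else 0) = 1 := by
      have : ImbRPS n (Sum.inl i) (Sum.inr (Sum.inr ())) = 1 := by
        rw [imbRPS_one_iff]
        simp [ImbBeats]
      simp [this]
    rw [h1, h2, h3, Sum.elim_inl]
    have := i.2
    omega
  · have h1 : (∑ j : Fin n, if ImbRPS n (Sum.inr (Sum.inl i)) (Sum.inl j) = 1
        then (1:ℕ) else 0) = 1 := by
      rw [← Finset.card_filter]
      have he : (Finset.univ.filter fun j : Fin n =>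
          ImbRPS n (Sum.inr (Sum.inl i)) (Sum.inl j) = 1) = {i} := by
        ext j
        simp only [Finset.mem_filter, Finset.mem_univ, true_and, Finset.mem_singleton,
          imbRPS_one_iff]
        simp [ImbBeats]
      rw [he, Finset.card_singleton]
    have h2 : (∑ j : Fin n, if ImbRPS n (Sum.inr (Sum.inl i)) (Sum.inr (Sum.inl j)) = 1
        then (1:ℕ) else 0) = (i : ℕ) := by
      rw [← Finset.card_filter]
      have he : (Finset.univ.filter fun j : Fin n =>
          ImbRPS n (Sum.inr (Sum.inl i)) (Sum.inr (Sum.inl j)) = 1) = Finset.Iio i := by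
        ext j
        simp only [Finset.mem_filter, Finset.mem_univ, true_and, Finset.mem_Iio,
          imbRPS_one_iff]
        simp [ImbBeats]
      rw [he, Fin.card_Iio]
    have h3 : (∑ j : Unit, if ImbRPS n (Sum.inr (Sum.inl i)) (Sum.inr (Sum.inr j)) = 1
        then (1:ℕ) else 0) = 0 := by
      have : ¬ ImbRPS n (Sum.inr (Sum.inl i)) (Sum.inr (Sum.inr ())) = 1 := by
        rw [imbRPS_one_iff]
        simp [ImbBeats]
      simp [this]
    rw [h1, h2, h3, Sum.elim_inr, Sum.elim_inl]
    omega
  · have h1 : (∑ j : Fin n, if ImbRPS n (Sum.inr (Sum.inr u)) (Sum.inl j) = 1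
        then (1:ℕ) else 0) = 0 := by
      apply Finset.sum_eq_zero
      intro j _
      have : ¬ ImbRPS n (Sum.inr (Sum.inr u)) (Sum.inl j) = 1 := by
        rw [imbRPS_one_iff]
        simp [ImbBeats]
      simp [this]
    have h2 : (∑ j : Fin n, if ImbRPS n (Sum.inr (Sum.inr u)) (Sum.inr (Sum.inl j)) = 1
        then (1:ℕ) else 0) = n := by
      have hterm : ∀ j : Fin n, (if ImbRPS n (Sum.inr (Sum.inr u)) (Sum.inr (Sum.inl j)) = 1
          then (1:ℕ) else 0) = 1 := by
        intro j
        have : ImbRPS n (Sum.inr (Sum.inr u)) (Sum.inr (Sum.inl j)) = 1 := by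
          rw [imbRPS_one_iff]
          simp [ImbBeats]
        simp [this]
      rw [Finset.sum_congr rfl (fun j _ => hterm j), Finset.sum_const, Finset.card_univ,
        Fintype.card_fin, smul_eq_mul, mul_one]
    have h3 : (∑ j : Unit, if ImbRPS n (Sum.inr (Sum.inr u)) (Sum.inr (Sum.inr j)) = 1
        then (1:ℕ) else 0) = 0 := by
      have : ¬ ImbRPS n (Sum.inr (Sum.inr u)) (Sum.inr (Sum.inr ())) = 1 := by
        rw [imbRPS_one_iff]
        simp [ImbBeats]
      simp [this]
    rw [h1, h2, h3, Sum.elim_inr, Sum.elim_inr]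
    omega

lemma imb_card (n : ℕ) : Fintype.card (ImbVertex n) = 2 * n + 1 := by
  simp only [ImbVertex, Fintype.card_sum, Fintype.card_fin, Fintype.card_unit]
  omega

end AuxImb



section AuxImb2
open Finset

lemma imb_tmult_n (n : ℕ) (hn : 1 ≤ n) : tmult (ImbRPS n) n = 3 := by
  rw [tmult]
  have he : (Finset.univ.filter fun v : ImbVertex n => tdeg (ImbRPS n) v = n)
      = {Sum.inl ⟨n - 1, by omega⟩, Sum.inr (Sum.inl ⟨n - 1, by omega⟩),
          Sum.inr (Sum.inr ())} := by
    ext v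
    simp only [Finset.mem_filter, Finset.mem_univ, true_and, imb_tdeg,
      Finset.mem_insert, Finset.mem_singleton]
    rcases v with i | i | u
    · have hi := i.2
      simp only [Sum.elim_inl]
      simp [Fin.ext_iff]
      omega
    · have hi := i.2
      simp only [Sum.elim_inr, Sum.elim_inl]
      simp [Fin.ext_iff]
      omega
    · simp
  rw [he, Finset.card_insert_of_notMem (by simp), Finset.card_insert_of_notMem (by simp),
    Finset.card_singleton]

lemma imb_tmult_le (n d : ℕ) (hd : d ≠ n) : tmult (ImbRPS n) d ≤ 1 := by
  rw [tmult]
  apply Finset.card_le_one.mpr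
  intro x hx y hy
  simp only [Finset.mem_filter, Finset.mem_univ, true_and, imb_tdeg] at hx hy
  rcases x with i | i | u <;> rcases y with j | j | w <;>
    simp only [Sum.elim_inl, Sum.elim_inr] at hx hy
  · have hi := i.2; have hj := j.2
    exact congrArg Sum.inl (Fin.ext (by omega))
  · have hi := i.2; have hj := j.2
    exfalso; omega
  · have hi := i.2
    exfalso; omega
  · have hi := i.2; have hj := j.2
    exfalso; omega
  · have hi := i.2; have hj := j.2
    exact congrArg (fun x => Sum.inr (Sum.inl x)) (Fin.ext (by omega))
  · have hi := i.2
    exfalso; omega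
  · have hj := j.2
    exfalso; omega
  · have hj := j.2
    exfalso; omega
  · cases u; cases w; rfl

lemma imb_S (n : ℕ) (hn : 1 ≤ n) :
    ∑ d ∈ Finset.univ.image (tdeg (ImbRPS n)),
      (tmult (ImbRPS n) d : ℝ) * Real.log (tmult (ImbRPS n) d) = 3 * Real.log 3 := by
  have hmem : n ∈ Finset.univ.image (tdeg (ImbRPS n)) := by
    apply Finset.mem_image.mpr
    refine ⟨Sum.inr (Sum.inr ()), Finset.mem_univ _, ?_⟩
    rw [imb_tdeg]
    rfl
  rw [Finset.sum_eq_single_of_mem n hmem]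
  · rw [imb_tmult_n n hn]
    norm_num
  · intro d hd hdn
    have h1 : 1 ≤ tmult (ImbRPS n) d := by
      obtain ⟨i, _, rfl⟩ := Finset.mem_image.mp hd
      rw [tmult, Nat.succ_le_iff, Finset.card_pos]
      exact ⟨i, by simp⟩
    have h2 := imb_tmult_le n d hdn
    have h3 : tmult (ImbRPS n) d = 1 := le_antisymm h2 h1
    rw [h3]
    norm_num

end AuxImb2

/-- Among playable `(2n+1)`-tournaments, the entropy of the score distribution is at
most `log(2n+1) - (3/(2n+1)) log 3`, with equality for the imbalanced `(2n+1)`-RPS: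
the imbalanced `(2n+1)`-RPS maximizes the uniform imbalance of entropy `UI_e`. -/
theorem imbalanced_RPS_maximizes_entropy (n : ℕ) (hn : 1 ≤ n) :
    (∀ A : Matrix (Fin (2 * n + 1)) (Fin (2 * n + 1)) ℝ,
      IsTournament A → Playable A →
        scoreEntropy A
          ≤ Real.log (2 * n + 1) - (3 / (2 * n + 1)) * Real.log 3) ∧
    scoreEntropy (ImbRPS n)
      = Real.log (2 * n + 1) - (3 / (2 * n + 1)) * Real.log 3 := by
  constructor
  · intro A hT hP
    obtain ⟨v, _, heq, hpos⟩ := hP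
    have hT' : Tourn A := hT
    have hcard : Fintype.card (Fin (2 * n + 1)) = 2 * n + 1 := Fintype.card_fin _
    have hU : Uncov A := uncov_of_eq hT' hpos heq
    have hdeg : ∀ i, 1 ≤ tdeg A i ∧ tdeg A i + 2 ≤ 2 * n + 1 := by
      intro i
      have h := tdeg_bounds hT' hpos heq (by rw [hcard]; omega) i
      rw [hcard] at h
      exact h
    have hS := S_ge n hn A hT' hU hcard hdeg
    have hE := entropy_eq A hT' (by rw [hcard]; omega)
    rw [hE, hcard]
    have hcast : ((2 * n + 1 : ℕ) : ℝ) = 2 * (n : ℝ) + 1 := by push_cast; ring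
    rw [hcast]
    have h3 : (3 : ℝ) / (2 * (n : ℝ) + 1) * Real.log 3
        = (2 * (n : ℝ) + 1)⁻¹ * (3 * Real.log 3) := by ring
    rw [h3]
    apply sub_le_sub_left
    apply mul_le_mul_of_nonneg_left hS (by positivity)
  · have hT := imb_tourn n
    have hE := entropy_eq (ImbRPS n) hT (by rw [imb_card]; omega)
    rw [hE, imb_card n, imb_S n hn]
    push_cast
    ring
end

section
/- Let A : Matrix (Fin m) (Fin m) ℝ and B : Matrix (Fin k) (Fin k) ℝ be skew-symmetric, and fix l : Fin m. Let C be the blow-up of A by B at l: the matrix indexed by {i : Fin m // i ≠ l} ⊕ Fin k with C (inl i) (inl j) = A i j, C (inl i) (inr t) = A i l, C (inr t) (inl j) = A l j, and C (inr t) (inr t') = B t t'. Suppose v is a probability vector of size m with A.mulVec v = 0 and w is a probability vector of size k with B.mulVec w = 0. Define u by u (inl i) = v i and u (inr t) = v l · w t. Then u is a probability vector (nonnegative entries summing to 1) and C.mulVec u = 0; in particular (u, u) is a Nash equilibrium of the blown-up symmetric zero-sum game. -/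
open Matrix

/-- The blow-up of the symmetric game `A` at the pure strategy `l` by the symmetric
game `B`: strategy `l` is replaced by a full copy of `B`, with cross payoffs
inherited from `l`. -/
def blowUp {m k : ℕ} (A : Matrix (Fin m) (Fin m) ℝ) (B : Matrix (Fin k) (Fin k) ℝ)
    (l : Fin m) :
    Matrix ({i : Fin m // i ≠ l} ⊕ Fin k) ({i : Fin m // i ≠ l} ⊕ Fin k) ℝ :=
  Matrix.of fun x y =>
    match x, y with
    | Sum.inl i, Sum.inl j => A i j
    | Sum.inl i, Sum.inr _ => A i l
    | Sum.inr _, Sum.inl j => A l j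
    | Sum.inr t, Sum.inr t' => B t t'

lemma sum_subtype_ne {m : ℕ} (l : Fin m) (f : Fin m → ℝ) :
    ∑ i : {i : Fin m // i ≠ l}, f i.val = ∑ i, f i - f l := by
  rw [← Finset.sum_subtype (Finset.univ.erase l) (by simp [Finset.mem_erase]) f]
  rw [eq_sub_iff_add_eq, Finset.sum_erase_add _ _ (Finset.mem_univ l)]

/-- Given kernel probability vectors `v` for a skew-symmetric game `A` and `w` for a
skew-symmetric game `B`, the vector `u` with `u (inl i) = v i` and
`u (inr t) = v l · w t` is a kernel probability vector of the blow-up of `A` at `l`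
by `B`; in particular `(u, u)` is a Nash equilibrium of the blown-up symmetric
zero-sum game. -/
theorem blowUp_nash {m k : ℕ} (A : Matrix (Fin m) (Fin m) ℝ)
    (B : Matrix (Fin k) (Fin k) ℝ) (hA : Aᵀ = -A) (hB : Bᵀ = -B) (l : Fin m)
    (v : Fin m → ℝ) (hv0 : ∀ i, 0 ≤ v i) (hv1 : ∑ i, v i = 1)
    (hvker : A.mulVec v = 0)
    (w : Fin k → ℝ) (hw0 : ∀ t, 0 ≤ w t) (hw1 : ∑ t, w t = 1)
    (hwker : B.mulVec w = 0) :
    let u : {i : Fin m // i ≠ l} ⊕ Fin k → ℝ :=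
      fun x => match x with
        | Sum.inl i => v i
        | Sum.inr t => v l * w t
    (∀ x, 0 ≤ u x) ∧ (∑ x, u x) = 1 ∧ (blowUp A B l).mulVec u = 0 ∧
      (∀ z : {i : Fin m // i ≠ l} ⊕ Fin k → ℝ, (∀ x, 0 ≤ z x) → (∑ x, z x) = 1 →
        z ⬝ᵥ (blowUp A B l).mulVec u ≤ u ⬝ᵥ (blowUp A B l).mulVec u) := by
  intro u
  have hAll : A l l = 0 := by
    have := congrFun (congrFun hA l) l
    simp [Matrix.transpose_apply] at this
    linarith
  have hker : (blowUp A B l).mulVec u = 0 := by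
    funext x
    cases x with
    | inl i =>
        have hv : (A.mulVec v) i = 0 := congrFun hvker i
        simp only [Matrix.mulVec, dotProduct] at hv ⊢
        rw [Fintype.sum_sum_type]
        simp only [blowUp, Matrix.of_apply, Pi.zero_apply]
        have h1 : ∑ t : Fin k, A i l * (v l * w t) = A i l * v l := by
          rw [← Finset.mul_sum, ← Finset.mul_sum, hw1]; ring
        have h2 : ∑ j : {j : Fin m // j ≠ l}, A i j.val * v j.val
            = ∑ j, A i j * v j - A i l * v l :=
          sum_subtype_ne l (fun j => A i j * v j)
        show (∑ j : {j : Fin m // j ≠ l}, A i j.val * v j.val)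
            + ∑ t : Fin k, A i l * (v l * w t) = 0
        rw [h1, h2, hv]; ring
    | inr t =>
        have hvl : (A.mulVec v) l = 0 := congrFun hvker l
        have hw : (B.mulVec w) t = 0 := congrFun hwker t
        simp only [Matrix.mulVec, dotProduct] at hvl hw ⊢
        rw [Fintype.sum_sum_type]
        simp only [blowUp, Matrix.of_apply, Pi.zero_apply]
        have h1 : ∑ t' : Fin k, B t t' * (v l * w t') = v l * ∑ t', B t t' * w t' := by
          rw [Finset.mul_sum]; congr 1; funext t'; ring
        have h2 : ∑ j : {j : Fin m // j ≠ l}, A l j.val * v j.val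
            = ∑ j, A l j * v j - A l l * v l :=
          sum_subtype_ne l (fun j => A l j * v j)
        show (∑ j : {j : Fin m // j ≠ l}, A l j.val * v j.val)
            + ∑ t' : Fin k, B t t' * (v l * w t') = 0
        rw [h1, h2, hvl, hw, hAll]; ring
  refine ⟨?_, ?_, hker, ?_⟩
  · rintro (i | t)
    · exact hv0 i
    · exact mul_nonneg (hv0 l) (hw0 t)
  · rw [Fintype.sum_sum_type]
    have h1 : ∑ t : Fin k, u (Sum.inr t) = v l := by
      show ∑ t : Fin k, v l * w t = v l
      rw [← Finset.mul_sum, hw1, mul_one]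
    have h2 : ∑ i : {i : Fin m // i ≠ l}, u (Sum.inl i) = ∑ i, v i - v l :=
      sum_subtype_ne l v
    rw [h1, h2, hv1]; ring
  · intro z _ _
    rw [hker]
    simp
end
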